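/- arXiv:2101.01809 — 15 statements merged into one kernel-verified Lean document; each statement's English description precedes it below -/
import Mathlib

section
/- Let P be a graded weakly prime ideal of R. If P is not a graded prime ideal of R, then P² = 0 (i.e., the product of the ideal P with itself is the zero ideal). -/
/-- The additive subgroup generated by all products `a * b` with `a ∈ S`, `b ∈ T`.
For two-sided ideals `I`, `J`, `mulClosure I J` is the ideal product `IJ`. -/
def mulClosure {R : Type*} [NonUnitalRing R] (S T : Set R) : AddSubgroup R :=
  AddSubgroup.closure {x | ∃ a ∈ S, ∃ b ∈ T, a * b = x}

/-- A two-sided ideal of a `G`-graded ring is graded if every homogeneous component of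
every element of the ideal lies in the ideal. -/
def IsGradedIdeal {G R : Type*} [DecidableEq G] [NonUnitalRing R]
    (𝒜 : G → AddSubgroup R) [DirectSum.Decomposition 𝒜] (P : TwoSidedIdeal R) : Prop :=
  ∀ x ∈ P, ∀ g : G, (DirectSum.decompose 𝒜 x g : R) ∈ P

/-- A proper graded ideal `P` is graded prime if `IJ ⊆ P` implies `I ⊆ P` or `J ⊆ P`
for all graded ideals `I`, `J`. -/
def IsGradedPrime {G R : Type*} [DecidableEq G] [NonUnitalRing R]
    (𝒜 : G → AddSubgroup R) [DirectSum.Decomposition 𝒜] (P : TwoSidedIdeal R) : Prop :=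
  P ≠ ⊤ ∧ IsGradedIdeal 𝒜 P ∧
    ∀ I J : TwoSidedIdeal R, IsGradedIdeal 𝒜 I → IsGradedIdeal 𝒜 J →
      (mulClosure (I : Set R) (J : Set R) : Set R) ⊆ (P : Set R) → I ≤ P ∨ J ≤ P

/-- A proper graded ideal `P` is graded weakly prime if `0 ≠ IJ ⊆ P` implies `I ⊆ P` or
`J ⊆ P` for all graded ideals `I`, `J`. -/
def IsGradedWeaklyPrime {G R : Type*} [DecidableEq G] [NonUnitalRing R]
    (𝒜 : G → AddSubgroup R) [DirectSum.Decomposition 𝒜] (P : TwoSidedIdeal R) : Prop :=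
  P ≠ ⊤ ∧ IsGradedIdeal 𝒜 P ∧
    ∀ I J : TwoSidedIdeal R, IsGradedIdeal 𝒜 I → IsGradedIdeal 𝒜 J →
      mulClosure (I : Set R) (J : Set R) ≠ ⊥ →
      (mulClosure (I : Set R) (J : Set R) : Set R) ⊆ (P : Set R) → I ≤ P ∨ J ≤ P

/-- If `P` is a graded weakly prime ideal of `R` that is not graded prime, then `P² = 0`. -/
theorem stmt_0 {G R : Type*} [Group G] [DecidableEq G] [NonUnitalRing R]
    (𝒜 : G → AddSubgroup R) [DirectSum.Decomposition 𝒜]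
    (hmul : ∀ ⦃g h : G⦄ ⦃x y : R⦄, x ∈ 𝒜 g → y ∈ 𝒜 h → x * y ∈ 𝒜 (g * h))
    (P : TwoSidedIdeal R) (hwp : IsGradedWeaklyPrime 𝒜 P) (hnp : ¬ IsGradedPrime 𝒜 P) :
    mulClosure (P : Set R) (P : Set R) = ⊥ := by
  by_contra hne
  apply hnp
  obtain ⟨hP, hGr, hW⟩ := hwp
  refine ⟨hP, hGr, fun I J hI hJ hIJ => ?_⟩
  by_cases h0 : mulClosure (I : Set R) (J : Set R) = ⊥
  · -- Use `I ⊔ P` and `J ⊔ P`.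
    have hsupGr : ∀ K : TwoSidedIdeal R, IsGradedIdeal 𝒜 K → IsGradedIdeal 𝒜 (K ⊔ P) := by
      intro K hK x hx g
      rw [TwoSidedIdeal.mem_sup] at hx ⊢
      obtain ⟨y, hy, z, hz, rfl⟩ := hx
      exact ⟨_, hK y hy g, _, hGr z hz g, by rw [DirectSum.decompose_add]; rfl⟩
    have hsub : (mulClosure ((I ⊔ P : TwoSidedIdeal R) : Set R)
        ((J ⊔ P : TwoSidedIdeal R) : Set R) : Set R) ⊆ (P : Set R) := by
      intro x hx
      refine AddSubgroup.closure_induction ?_ (zero_mem P) (fun a b _ _ ha hb => P.add_mem ha hb)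
        (fun a _ ha => P.neg_mem ha) hx
      rintro _ ⟨a, ha, b, hb, rfl⟩
      rw [SetLike.mem_coe, TwoSidedIdeal.mem_sup] at ha hb
      rw [SetLike.mem_coe]
      obtain ⟨i, hi, p, hp, rfl⟩ := ha
      obtain ⟨j, hj, q, hq, rfl⟩ := hb
      have h1 : i * j ∈ P := hIJ (AddSubgroup.subset_closure ⟨i, hi, j, hj, rfl⟩)
      have : (i + p) * (j + q) = i * j + i * q + p * (j + q) := by rw [add_mul, mul_add i]
      rw [this]
      exact P.add_mem (P.add_mem h1 (P.mul_mem_left _ _ hq)) (P.mul_mem_right _ _ hp)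
    have hle : mulClosure (P : Set R) (P : Set R) ≤
        mulClosure ((I ⊔ P : TwoSidedIdeal R) : Set R) ((J ⊔ P : TwoSidedIdeal R) : Set R) := by
      apply AddSubgroup.closure_mono
      rintro _ ⟨a, ha, b, hb, rfl⟩
      exact ⟨a, TwoSidedIdeal.mem_sup_right ha, b, TwoSidedIdeal.mem_sup_right hb, rfl⟩
    have hne' : mulClosure ((I ⊔ P : TwoSidedIdeal R) : Set R)
        ((J ⊔ P : TwoSidedIdeal R) : Set R) ≠ ⊥ := by
      intro h
      exact hne (le_bot_iff.mp (h ▸ hle))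
    rcases hW (I ⊔ P) (J ⊔ P) (hsupGr I hI) (hsupGr J hJ) hne' hsub with h | h
    · exact Or.inl (le_trans le_sup_left h)
    · exact Or.inr (le_trans le_sup_left h)
  · exact hW I J hI hJ h0 hIJ
end

section
/- Every proper graded ideal of a G-graded ring R is a graded weakly prime ideal if and only if for any two graded ideals P and Q of R, one has PQ = P, PQ = Q, or PQ = 0. -/
section Aux

variable {G R : Type*} [DecidableEq G] [NonUnitalRing R]

/-- A two-sided ideal viewed as an additive subgroup. -/
def tsiAsub (I : TwoSidedIdeal R) : AddSubgroup R where
  carrier := I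
  zero_mem' := I.zero_mem
  add_mem' := fun h1 h2 => I.add_mem h1 h2
  neg_mem' := fun h => I.neg_mem h

lemma mulClosure_subset_left (I J : TwoSidedIdeal R) :
    (mulClosure (I : Set R) (J : Set R) : Set R) ⊆ (I : Set R) := by
  intro x hx
  have : mulClosure (I : Set R) (J : Set R) ≤ tsiAsub I := by
    rw [mulClosure, AddSubgroup.closure_le]
    rintro _ ⟨a, ha, b, hb, rfl⟩
    exact I.mul_mem_right a b ha
  exact this hx

lemma mulClosure_subset_right (I J : TwoSidedIdeal R) :
    (mulClosure (I : Set R) (J : Set R) : Set R) ⊆ (J : Set R) := by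
  intro x hx
  have : mulClosure (I : Set R) (J : Set R) ≤ tsiAsub J := by
    rw [mulClosure, AddSubgroup.closure_le]
    rintro _ ⟨a, ha, b, hb, rfl⟩
    exact J.mul_mem_left a b hb
  exact this hx

variable [Mul G] (𝒜 : G → AddSubgroup R) [DirectSum.Decomposition 𝒜]

lemma decompose_sum_mem {ι : Type*} (M : AddSubgroup R) (s : Finset ι) (f : ι → R)
    (h : ∀ i ∈ s, ∀ g : G, (DirectSum.decompose 𝒜 (f i) g : R) ∈ M) :
    ∀ g : G, (DirectSum.decompose 𝒜 (∑ i ∈ s, f i) g : R) ∈ M := by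
  classical
  induction s using Finset.induction with
  | empty => intro g; simpa using M.zero_mem
  | @insert a s ha ih =>
    intro g
    rw [Finset.sum_insert ha, DirectSum.decompose_add, DirectSum.add_apply,
      AddSubgroup.coe_add]
    exact M.add_mem (h a (Finset.mem_insert_self a s) g)
      (ih (fun i hi g => h i (Finset.mem_insert_of_mem hi) g) g)

lemma mulClosure_graded_mem (hmul : ∀ ⦃g h : G⦄ ⦃x y : R⦄, x ∈ 𝒜 g → y ∈ 𝒜 h → x * y ∈ 𝒜 (g * h))
    (I J : TwoSidedIdeal R) (hI : IsGradedIdeal 𝒜 I) (hJ : IsGradedIdeal 𝒜 J) :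
    ∀ x ∈ mulClosure (I : Set R) (J : Set R), ∀ g : G,
      (DirectSum.decompose 𝒜 x g : R) ∈ mulClosure (I : Set R) (J : Set R) := by
  classical
  set M := mulClosure (I : Set R) (J : Set R) with hM
  intro x hx
  refine AddSubgroup.closure_induction ?_ ?_ ?_ ?_ hx
  · rintro _ ⟨a, ha, b, hb, rfl⟩
    have hasum := DirectSum.sum_support_decompose 𝒜 a
    have hbsum := DirectSum.sum_support_decompose 𝒜 b
    have hab : a * b = ∑ i ∈ (DirectSum.decompose 𝒜 a).support,
        ∑ j ∈ (DirectSum.decompose 𝒜 b).support,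
          (DirectSum.decompose 𝒜 a i : R) * (DirectSum.decompose 𝒜 b j : R) := by
      conv_lhs => rw [← hasum, ← hbsum]
      rw [Finset.sum_mul_sum]
    rw [hab]
    refine decompose_sum_mem 𝒜 M _ _ (fun i _ => ?_)
    refine decompose_sum_mem 𝒜 M _ _ (fun j _ g => ?_)
    have hmem : (DirectSum.decompose 𝒜 a i : R) * (DirectSum.decompose 𝒜 b j : R) ∈ 𝒜 (i * j) :=
      hmul (SetLike.coe_mem _) (SetLike.coe_mem _)
    have hMmem : (DirectSum.decompose 𝒜 a i : R) * (DirectSum.decompose 𝒜 b j : R) ∈ M :=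
      AddSubgroup.subset_closure ⟨_, hI a ha i, _, hJ b hb j, rfl⟩
    by_cases hg : i * j = g
    · subst hg
      rw [DirectSum.decompose_of_mem_same 𝒜 hmem]
      exact hMmem
    · rw [DirectSum.decompose_of_mem_ne 𝒜 hmem hg]
      exact M.zero_mem
  · intro g; simpa using M.zero_mem
  · intro y z _ _ hy hz g
    rw [DirectSum.decompose_add, DirectSum.add_apply, AddSubgroup.coe_add]
    exact M.add_mem (hy g) (hz g)
  · intro y _ hy g
    have : DirectSum.decompose 𝒜 (-y) = -DirectSum.decompose 𝒜 y :=
      map_neg (DirectSum.decomposeAddEquiv 𝒜) y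
    rw [this, DFinsupp.neg_apply, AddSubgroup.coe_neg]
    exact M.neg_mem (hy g)

/-- The product of two two-sided ideals, as a two-sided ideal. -/
def prodIdeal (I J : TwoSidedIdeal R) : TwoSidedIdeal R :=
  TwoSidedIdeal.mk' (mulClosure (I : Set R) (J : Set R))
    (AddSubgroup.zero_mem _)
    (fun hx hy => AddSubgroup.add_mem _ hx hy)
    (fun hx => AddSubgroup.neg_mem _ hx)
    (by
      intro x y hy
      refine AddSubgroup.closure_induction ?_ ?_ ?_ ?_ hy
      · rintro _ ⟨a, ha, b, hb, rfl⟩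
        rw [← mul_assoc]
        exact AddSubgroup.subset_closure ⟨x * a, I.mul_mem_left x a ha, b, hb, rfl⟩
      · rw [mul_zero]; exact AddSubgroup.zero_mem _
      · intro u v _ _ hu hv
        rw [mul_add]; exact AddSubgroup.add_mem _ hu hv
      · intro u _ hu
        rw [mul_neg]; exact AddSubgroup.neg_mem _ hu)
    (by
      intro x y hx
      refine AddSubgroup.closure_induction ?_ ?_ ?_ ?_ hx
      · rintro _ ⟨a, ha, b, hb, rfl⟩
        rw [mul_assoc]
        exact AddSubgroup.subset_closure ⟨a, ha, b * y, J.mul_mem_right b y hb, rfl⟩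
      · rw [zero_mul]; exact AddSubgroup.zero_mem _
      · intro u v _ _ hu hv
        rw [add_mul]; exact AddSubgroup.add_mem _ hu hv
      · intro u _ hu
        rw [neg_mul]; exact AddSubgroup.neg_mem _ hu)

lemma prodIdeal_coe (I J : TwoSidedIdeal R) :
    (prodIdeal I J : Set R) = (mulClosure (I : Set R) (J : Set R) : Set R) :=
  TwoSidedIdeal.coe_mk' _ _ _ _ _ _

end Aux

/-- Every proper graded ideal of `R` is graded weakly prime iff for any graded ideals
`P` and `Q`, `PQ = P`, `PQ = Q`, or `PQ = 0`. -/
theorem stmt_2 {G R : Type*} [Group G] [DecidableEq G] [NonUnitalRing R]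
    (𝒜 : G → AddSubgroup R) [DirectSum.Decomposition 𝒜]
    (hmul : ∀ ⦃g h : G⦄ ⦃x y : R⦄, x ∈ 𝒜 g → y ∈ 𝒜 h → x * y ∈ 𝒜 (g * h)) :
    (∀ P : TwoSidedIdeal R, P ≠ ⊤ → IsGradedIdeal 𝒜 P → IsGradedWeaklyPrime 𝒜 P) ↔
      ∀ P Q : TwoSidedIdeal R, IsGradedIdeal 𝒜 P → IsGradedIdeal 𝒜 Q →
        (mulClosure (P : Set R) (Q : Set R) : Set R) = (P : Set R) ∨
        (mulClosure (P : Set R) (Q : Set R) : Set R) = (Q : Set R) ∨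
        mulClosure (P : Set R) (Q : Set R) = ⊥ := by
  constructor
  · intro h P Q hP hQ
    by_cases hbot : mulClosure (P : Set R) (Q : Set R) = ⊥
    · exact Or.inr (Or.inr hbot)
    set K := prodIdeal P Q with hK
    have hKcoe : (K : Set R) = (mulClosure (P : Set R) (Q : Set R) : Set R) := prodIdeal_coe P Q
    by_cases htop : K = ⊤
    · left
      refine Set.Subset.antisymm (mulClosure_subset_left P Q) (fun x _ => ?_)
      rw [← hKcoe, htop]
      exact SetLike.mem_coe.mpr (TwoSidedIdeal.mem_top R)
    · have hKgr : IsGradedIdeal 𝒜 K := by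
        intro x hx g
        have hx' : x ∈ mulClosure (P : Set R) (Q : Set R) := by rw [← SetLike.mem_coe, hKcoe] at hx; exact hx
        have := mulClosure_graded_mem 𝒜 hmul P Q hP hQ x hx' g
        rw [← SetLike.mem_coe, hKcoe]
        exact this
      obtain ⟨-, -, hwp⟩ := h K htop hKgr
      rcases hwp P Q hP hQ hbot (by rw [hKcoe]) with hle | hle
      · left
        exact Set.Subset.antisymm (mulClosure_subset_left P Q)
          (fun x hx => by rw [← hKcoe]; exact hle hx)
      · right; left
        exact Set.Subset.antisymm (mulClosure_subset_right P Q)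
          (fun x hx => by rw [← hKcoe]; exact hle hx)
  · intro h P hPtop hPgr
    refine ⟨hPtop, hPgr, fun I J hI hJ hne hsub => ?_⟩
    rcases h I J hI hJ with heq | heq | heq
    · left
      intro x hx
      exact hsub (by rw [heq]; exact hx)
    · right
      intro x hx
      exact hsub (by rw [heq]; exact hx)
    · exact absurd heq hne
end

section
/- Let R be a G-graded ring in which every proper graded ideal is a graded weakly prime ideal. Then for any graded ideal P of R, either P² = P or P² = 0. -/
/-- If every proper graded ideal of `R` is graded weakly prime, then for any graded ideal
`P`, either `P² = P` or `P² = 0`. -/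
theorem stmt_3 {G R : Type*} [Group G] [DecidableEq G] [NonUnitalRing R]
    (𝒜 : G → AddSubgroup R) [DirectSum.Decomposition 𝒜]
    (hmul : ∀ ⦃g h : G⦄ ⦃x y : R⦄, x ∈ 𝒜 g → y ∈ 𝒜 h → x * y ∈ 𝒜 (g * h))
    (hwp : ∀ P : TwoSidedIdeal R, P ≠ ⊤ → IsGradedIdeal 𝒜 P → IsGradedWeaklyPrime 𝒜 P) :
    ∀ P : TwoSidedIdeal R, IsGradedIdeal 𝒜 P →
      (mulClosure (P : Set R) (P : Set R) : Set R) = (P : Set R) ∨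
      mulClosure (P : Set R) (P : Set R) = ⊥ := by
  intro P hP
  classical
  set S : Set R := {x | ∃ a ∈ (P : Set R), ∃ b ∈ (P : Set R), a * b = x} with hS
  -- P² ⊆ P
  have hsub : (mulClosure (P : Set R) (P : Set R) : Set R) ⊆ (P : Set R) := by
    intro x hx
    refine AddSubgroup.closure_induction ?_ ?_ ?_ ?_ hx
    · rintro y ⟨a, ha, b, hb, rfl⟩
      exact P.mul_mem_right a b ha
    · exact P.zero_mem
    · intro a b _ _ ha hb; exact P.add_mem ha hb
    · intro a _ ha; exact P.neg_mem ha
  -- P² as a two-sided ideal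
  have Qleft : ∀ {x y : R}, y ∈ mulClosure (P : Set R) (P : Set R) →
      x * y ∈ mulClosure (P : Set R) (P : Set R) := by
    intro x y hy
    refine AddSubgroup.closure_induction ?_ ?_ ?_ ?_ hy
    · rintro z ⟨a, ha, b, hb, rfl⟩
      rw [← mul_assoc]
      exact AddSubgroup.subset_closure ⟨x * a, P.mul_mem_left x a ha, b, hb, rfl⟩
    · simpa using AddSubgroup.zero_mem (mulClosure (P : Set R) (P : Set R))
    · intro a b _ _ ha hb; rw [mul_add]; exact AddSubgroup.add_mem _ ha hb
    · intro a _ ha; rw [mul_neg]; exact AddSubgroup.neg_mem _ ha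
  have Qright : ∀ {x y : R}, x ∈ mulClosure (P : Set R) (P : Set R) →
      x * y ∈ mulClosure (P : Set R) (P : Set R) := by
    intro x y hx
    refine AddSubgroup.closure_induction ?_ ?_ ?_ ?_ hx
    · rintro z ⟨a, ha, b, hb, rfl⟩
      rw [mul_assoc]
      exact AddSubgroup.subset_closure ⟨a, ha, b * y, P.mul_mem_right b y hb, rfl⟩
    · simpa using AddSubgroup.zero_mem (mulClosure (P : Set R) (P : Set R))
    · intro a b _ _ ha hb; rw [add_mul]; exact AddSubgroup.add_mem _ ha hb
    · intro a _ ha; rw [neg_mul]; exact AddSubgroup.neg_mem _ ha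
  set Q : TwoSidedIdeal R := TwoSidedIdeal.mk' (mulClosure (P : Set R) (P : Set R))
      (AddSubgroup.zero_mem _) (fun ha hb => AddSubgroup.add_mem _ ha hb)
      (fun ha => AddSubgroup.neg_mem _ ha) Qleft Qright with hQdef
  have hQmem : ∀ x : R, x ∈ Q ↔ x ∈ mulClosure (P : Set R) (P : Set R) :=
    TwoSidedIdeal.mem_mk' _ _ _ _ _ _
  -- Q is graded
  have hQgr : IsGradedIdeal 𝒜 Q := by
    intro x hx g
    rw [hQmem] at hx ⊢
    refine AddSubgroup.closure_induction ?_ ?_ ?_ ?_ hx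
    · rintro z ⟨a, ha, b, hb, rfl⟩
      have hab : a * b = ∑ i ∈ (DirectSum.decompose 𝒜 a).support,
          ∑ j ∈ (DirectSum.decompose 𝒜 b).support,
          (DirectSum.decompose 𝒜 a i : R) * (DirectSum.decompose 𝒜 b j : R) := by
        rw [← Finset.sum_mul_sum, DirectSum.sum_support_decompose,
          DirectSum.sum_support_decompose]
      rw [hab]
      rw [DirectSum.decompose_sum]
      rw [DFinsupp.finset_sum_apply, AddSubmonoidClass.coe_finset_sum]
      refine AddSubgroup.sum_mem _ fun i _ => ?_
      rw [DirectSum.decompose_sum, DFinsupp.finset_sum_apply, AddSubmonoidClass.coe_finset_sum]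
      refine AddSubgroup.sum_mem _ fun j _ => ?_
      have hmem : (DirectSum.decompose 𝒜 a i : R) * (DirectSum.decompose 𝒜 b j : R) ∈ 𝒜 (i * j) :=
        hmul (SetLike.coe_mem _) (SetLike.coe_mem _)
      by_cases h : i * j = g
      · rw [← h, DirectSum.decompose_of_mem_same 𝒜 hmem]
        exact AddSubgroup.subset_closure ⟨_, hP a ha i, _, hP b hb j, rfl⟩
      · rw [DirectSum.decompose_of_mem_ne 𝒜 hmem h]
        exact AddSubgroup.zero_mem _
    · simpa using AddSubgroup.zero_mem (mulClosure (P : Set R) (P : Set R))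
    · intro a b _ _ ha hb
      rw [DirectSum.decompose_add]
      exact AddSubgroup.add_mem _ ha hb
    · intro a _ ha
      rw [DirectSum.decompose_neg]
      exact AddSubgroup.neg_mem _ ha
  by_cases hz : mulClosure (P : Set R) (P : Set R) = ⊥
  · exact Or.inr hz
  left
  by_cases hQtop : Q = ⊤
  · -- then P² = univ ⊇ P
    have : ∀ x : R, x ∈ mulClosure (P : Set R) (P : Set R) := by
      intro x
      rw [← hQmem, hQtop]
      trivial
    exact Set.Subset.antisymm hsub fun x _ => this x
  · obtain ⟨-, -, hwpQ⟩ := hwp Q hQtop hQgr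
    rcases hwpQ P P hP hP hz (fun x hx => (hQmem x).mpr hx) with h | h
    · exact Set.Subset.antisymm hsub fun x hx => (hQmem x).mp (h hx)
    · exact Set.Subset.antisymm hsub fun x hx => (hQmem x).mp (h hx)
end

section
/- Let R be a G-graded ring such that every proper graded ideal of R is graded weakly prime and R² = R (the additive subgroup generated by all products of elements of R is all of R). Then R has at most two graded maximal ideals; that is, there do not exist three pairwise distinct graded maximal ideals of R. -/
/-- A graded maximal ideal is a proper graded ideal that is maximal under inclusion
among proper graded ideals. -/
def IsGradedMaximal {G R : Type*} [DecidableEq G] [NonUnitalRing R]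
    (𝒜 : G → AddSubgroup R) [DirectSum.Decomposition 𝒜] (P : TwoSidedIdeal R) : Prop :=
  IsGradedIdeal 𝒜 P ∧ P ≠ ⊤ ∧
    ∀ Q : TwoSidedIdeal R, IsGradedIdeal 𝒜 Q → Q ≠ ⊤ → P ≤ Q → P = Q

section aux
variable {G R : Type*} [Group G] [DecidableEq G] [NonUnitalRing R]
variable (𝒜 : G → AddSubgroup R) [DirectSum.Decomposition 𝒜]

lemma mulClosure_subset_twoSided {I J P : TwoSidedIdeal R}
    (h : ∀ a ∈ I, ∀ b ∈ J, a * b ∈ P) :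
    (mulClosure (I : Set R) (J : Set R) : Set R) ⊆ (P : Set R) := by
  intro x hx
  refine AddSubgroup.closure_induction ?_ P.zero_mem
    (fun a b _ _ ha hb => P.add_mem ha hb) (fun a _ ha => P.neg_mem ha) hx
  rintro y ⟨a, ha, b, hb, rfl⟩
  exact h a ha b hb
end aux

/-- If every proper graded ideal of `R` is graded weakly prime and `R² = R`, then `R` has
at most two graded maximal ideals. -/
theorem stmt_4 {G R : Type*} [Group G] [DecidableEq G] [NonUnitalRing R]
    (𝒜 : G → AddSubgroup R) [DirectSum.Decomposition 𝒜]
    (hmul : ∀ ⦃g h : G⦄ ⦃x y : R⦄, x ∈ 𝒜 g → y ∈ 𝒜 h → x * y ∈ 𝒜 (g * h))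
    (hwp : ∀ P : TwoSidedIdeal R, P ≠ ⊤ → IsGradedIdeal 𝒜 P → IsGradedWeaklyPrime 𝒜 P)
    (hR2 : (mulClosure (Set.univ : Set R) (Set.univ : Set R) : Set R) = Set.univ) :
    ¬ ∃ X₁ X₂ X₃ : TwoSidedIdeal R, IsGradedMaximal 𝒜 X₁ ∧ IsGradedMaximal 𝒜 X₂ ∧
        IsGradedMaximal 𝒜 X₃ ∧ X₁ ≠ X₂ ∧ X₁ ≠ X₃ ∧ X₂ ≠ X₃ := by
  
  rintro ⟨X₁, X₂, X₃, h1, h2, h3, h12, h13, h23⟩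
  -- a maximal ideal is not contained in a distinct maximal ideal
  have hne : ∀ X Y : TwoSidedIdeal R, IsGradedMaximal 𝒜 X → IsGradedMaximal 𝒜 Y →
      X ≠ Y → ¬ X ≤ Y := fun X Y hX hY hXY hle => hXY (hX.2.2 Y hY.1 hY.2.1 hle)
  -- products of distinct maximal ideals vanish
  have hzero : ∀ X Y : TwoSidedIdeal R, IsGradedMaximal 𝒜 X → IsGradedMaximal 𝒜 Y →
      X ≠ Y → ∀ a ∈ X, ∀ b ∈ Y, a * b = 0 := by
    intro X Y hX hY hXY
    set P : TwoSidedIdeal R := X ⊓ Y with hP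
    have hPg : IsGradedIdeal 𝒜 P := fun x hx g =>
      ⟨hX.1 x hx.1 g, hY.1 x hx.2 g⟩
    have hPt : P ≠ ⊤ := by
      intro h
      exact hX.2.1 (eq_top_iff.2 (h ▸ (inf_le_left : P ≤ X)))
    obtain ⟨-, -, hprime⟩ := hwp P hPt hPg
    have hsub : (mulClosure (X : Set R) (Y : Set R) : Set R) ⊆ (P : Set R) :=
      mulClosure_subset_twoSided fun a ha b hb =>
        ⟨X.mul_mem_right a b ha, Y.mul_mem_left a b hb⟩
    have hbot : mulClosure (X : Set R) (Y : Set R) = ⊥ := by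
      by_contra hne'
      rcases hprime X Y hX.1 hY.1 hne' hsub with h | h
      · exact hne X Y hX hY hXY (h.trans inf_le_right)
      · exact hne Y X hY hX (Ne.symm hXY) (h.trans inf_le_left)
    intro a ha b hb
    have : a * b ∈ mulClosure (X : Set R) (Y : Set R) :=
      AddSubgroup.subset_closure ⟨a, ha, b, hb, rfl⟩
    rw [hbot] at this
    exact this
  -- the sum of two distinct maximal ideals is everything
  have hsum : ∀ X Y : TwoSidedIdeal R, IsGradedMaximal 𝒜 X → IsGradedMaximal 𝒜 Y →
      X ≠ Y → ∀ r : R, ∃ a ∈ X, ∃ b ∈ Y, a + b = r := by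
    intro X Y hX hY hXY r
    have hg : IsGradedIdeal 𝒜 (X ⊔ Y) := by
      intro x hx g
      rw [TwoSidedIdeal.mem_sup] at hx
      obtain ⟨y, hy, z, hz, rfl⟩ := hx
      rw [DirectSum.decompose_add]
      simp only [DirectSum.add_apply, AddSubgroup.coe_add]
      exact (X ⊔ Y).add_mem (TwoSidedIdeal.mem_sup_left (hX.1 y hy g))
        (TwoSidedIdeal.mem_sup_right (hY.1 z hz g))
    have htop : X ⊔ Y = ⊤ := by
      by_contra h
      have := hX.2.2 (X ⊔ Y) hg h le_sup_left
      exact hne Y X hY hX (Ne.symm hXY) (this ▸ le_sup_right)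
    have : r ∈ X ⊔ Y := by rw [htop]; trivial
    rwa [TwoSidedIdeal.mem_sup] at this
  -- every product a*b lies in X₁
  have hmem : ∀ a b : R, a * b ∈ X₁ := by
    intro a b
    obtain ⟨a₁, ha₁, a₂, ha₂, rfl⟩ := hsum X₁ X₂ h1 h2 h12 a
    obtain ⟨b₁, hb₁, b₃, hb₃, rfl⟩ := hsum X₁ X₃ h1 h3 h13 b
    have e13 := hzero X₁ X₃ h1 h3 h13 a₁ ha₁ b₃ hb₃
    have e21 := hzero X₂ X₁ h2 h1 (Ne.symm h12) a₂ ha₂ b₁ hb₁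
    have e23 := hzero X₂ X₃ h2 h3 h23 a₂ ha₂ b₃ hb₃
    have : (a₁ + a₂) * (b₁ + b₃) = a₁ * b₁ := by
      rw [add_mul, mul_add, mul_add, e13, e21, e23]
      simp
    rw [this]
    exact X₁.mul_mem_right a₁ b₁ ha₁
  -- hence X₁ = ⊤, contradiction
  apply h1.2.1
  refine eq_top_iff.2 fun r _ => ?_
  have hr : r ∈ mulClosure (Set.univ : Set R) (Set.univ : Set R) := by
    have : r ∈ (mulClosure (Set.univ : Set R) (Set.univ : Set R) : Set R) := by
      rw [hR2]; trivial
    exact this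
  refine AddSubgroup.closure_induction ?_ X₁.zero_mem
    (fun x y _ _ hx hy => X₁.add_mem hx hy) (fun x _ hx => X₁.neg_mem hx) hr
  rintro x ⟨a, -, b, -, rfl⟩
  exact hmem a b
end

section
/- Let R be a G-graded ring such that every proper graded ideal of R is graded weakly prime. If X₁ and X₂ are two distinct graded maximal ideals of R, then X₁X₂ = 0 and X₂X₁ = 0. Moreover, if R has a unity, then X₁ ∩ X₂ = 0. -/
/-- The underlying additive subgroup of a two-sided ideal. -/
def tsiAddSubgroup {R : Type*} [NonUnitalRing R] (P : TwoSidedIdeal R) : AddSubgroup R where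
  carrier := P
  zero_mem' := P.zero_mem
  add_mem' := P.add_mem
  neg_mem' := P.neg_mem

lemma mulClosure_subset {R : Type*} [NonUnitalRing R] (I J P : TwoSidedIdeal R)
    (hI : I ≤ P ∨ J ≤ P) :
    (mulClosure (I : Set R) (J : Set R) : Set R) ⊆ (P : Set R) := by
  intro x hx
  have : x ∈ tsiAddSubgroup P := by
    refine AddSubgroup.closure_le (tsiAddSubgroup P) |>.2 ?_ hx
    rintro y ⟨a, ha, b, hb, rfl⟩
    rcases hI with h | h
    · exact P.mul_mem_right _ _ (h ha)
    · exact P.mul_mem_left _ _ (h hb)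
  exact this

/-- If every proper graded ideal of `R` is graded weakly prime and `X₁`, `X₂` are distinct
graded maximal ideals, then `X₁X₂ = X₂X₁ = 0`; moreover, if `R` has a unity then
`X₁ ∩ X₂ = 0`. -/
theorem stmt_5 {G R : Type*} [Group G] [DecidableEq G] [NonUnitalRing R]
    (𝒜 : G → AddSubgroup R) [DirectSum.Decomposition 𝒜]
    (hmul : ∀ ⦃g h : G⦄ ⦃x y : R⦄, x ∈ 𝒜 g → y ∈ 𝒜 h → x * y ∈ 𝒜 (g * h))
    (hwp : ∀ P : TwoSidedIdeal R, P ≠ ⊤ → IsGradedIdeal 𝒜 P → IsGradedWeaklyPrime 𝒜 P)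
    (X₁ X₂ : TwoSidedIdeal R) (h₁ : IsGradedMaximal 𝒜 X₁) (h₂ : IsGradedMaximal 𝒜 X₂)
    (hne : X₁ ≠ X₂) :
    mulClosure (X₁ : Set R) (X₂ : Set R) = ⊥ ∧
    mulClosure (X₂ : Set R) (X₁ : Set R) = ⊥ ∧
    ((∃ u : R, ∀ x : R, u * x = x ∧ x * u = x) → X₁ ⊓ X₂ = ⊥) := by
  -- X₁ ⊓ X₂ is a proper graded ideal
  have hinf_graded : IsGradedIdeal 𝒜 (X₁ ⊓ X₂) := by
    intro x hx g
    rw [TwoSidedIdeal.mem_inf] at hx ⊢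
    exact ⟨h₁.1 x hx.1 g, h₂.1 x hx.2 g⟩
  have hinf_ne : X₁ ⊓ X₂ ≠ ⊤ := fun h => h₁.2.1 (top_le_iff.1 (h ▸ inf_le_left))
  have hX₁nleX₂ : ¬ X₁ ≤ X₂ := fun h => hne (h₁.2.2 X₂ h₂.1 h₂.2.1 h)
  have hX₂nleX₁ : ¬ X₂ ≤ X₁ := fun h => hne.symm (h₂.2.2 X₁ h₁.1 h₁.2.1 h)
  obtain ⟨-, -, hwp'⟩ := hwp (X₁ ⊓ X₂) hinf_ne hinf_graded
  have hsub : ∀ A B : TwoSidedIdeal R,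
      (mulClosure (A : Set R) (B : Set R) : Set R) ⊆ ((A ⊓ B : TwoSidedIdeal R) : Set R) := by
    intro A B x hx
    have : x ∈ tsiAddSubgroup (A ⊓ B) := by
      refine AddSubgroup.closure_le _ |>.2 ?_ hx
      rintro y ⟨a, ha, b, hb, rfl⟩
      show a * b ∈ A ⊓ B
      rw [TwoSidedIdeal.mem_inf]
      exact ⟨A.mul_mem_right a b ha, B.mul_mem_left a b hb⟩
    exact this
  have h12 : mulClosure (X₁ : Set R) (X₂ : Set R) = ⊥ := by
    by_contra hne'
    rcases hwp' X₁ X₂ h₁.1 h₂.1 hne' (hsub X₁ X₂) with h | h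
    · exact hX₁nleX₂ (h.trans inf_le_right)
    · exact hX₂nleX₁ (h.trans inf_le_left)
  have h21 : mulClosure (X₂ : Set R) (X₁ : Set R) = ⊥ := by
    by_contra hne'
    have hsub' : (mulClosure (X₂ : Set R) (X₁ : Set R) : Set R) ⊆
        ((X₁ ⊓ X₂ : TwoSidedIdeal R) : Set R) := by
      intro x hx
      have := hsub X₂ X₁ hx
      rw [SetLike.mem_coe, TwoSidedIdeal.mem_inf] at this ⊢
      exact this.symm
    rcases hwp' X₂ X₁ h₂.1 h₁.1 hne' hsub' with h | h
    · exact hX₂nleX₁ (h.trans inf_le_left)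
    · exact hX₁nleX₂ (h.trans inf_le_right)
  refine ⟨h12, h21, ?_⟩
  rintro ⟨u, hu⟩
  -- the sum X₁ + X₂
  set S : TwoSidedIdeal R := TwoSidedIdeal.mk'
      {x | ∃ a ∈ X₁, ∃ b ∈ X₂, a + b = x}
      ⟨0, X₁.zero_mem, 0, X₂.zero_mem, by simp⟩
      (by rintro x y ⟨a, ha, b, hb, rfl⟩ ⟨c, hc, d, hd, rfl⟩
          exact ⟨a + c, X₁.add_mem ha hc, b + d, X₂.add_mem hb hd, by abel⟩)
      (by rintro x ⟨a, ha, b, hb, rfl⟩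
          exact ⟨-a, X₁.neg_mem ha, -b, X₂.neg_mem hb, by abel⟩)
      (by rintro x y ⟨a, ha, b, hb, rfl⟩
          exact ⟨x * a, X₁.mul_mem_left _ _ ha, x * b, X₂.mul_mem_left _ _ hb, (mul_add x a b).symm⟩)
      (by rintro x y ⟨a, ha, b, hb, rfl⟩
          exact ⟨a * y, X₁.mul_mem_right _ _ ha, b * y, X₂.mul_mem_right _ _ hb, (add_mul a b y).symm⟩)
      with hS
  have hmemS : ∀ x : R, x ∈ S ↔ ∃ a ∈ X₁, ∃ b ∈ X₂, a + b = x := fun x =>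
    TwoSidedIdeal.mem_mk' _ _ _ _ _ _ x
  have hSgraded : IsGradedIdeal 𝒜 S := by
    intro x hx g
    rw [hmemS] at hx
    obtain ⟨a, ha, b, hb, rfl⟩ := hx
    rw [hmemS]
    refine ⟨DirectSum.decompose 𝒜 a g, h₁.1 a ha g, DirectSum.decompose 𝒜 b g, h₂.1 b hb g, ?_⟩
    rw [← AddSubgroup.coe_add, ← DirectSum.add_apply, ← DirectSum.decompose_add]
  have hX₁S : X₁ ≤ S := fun x hx => (hmemS x).2 ⟨x, hx, 0, X₂.zero_mem, by simp⟩
  have hX₂S : X₂ ≤ S := fun x hx => (hmemS x).2 ⟨0, X₁.zero_mem, x, hx, by simp⟩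
  have hStop : S = ⊤ := by
    by_contra hS'
    exact hX₂nleX₁ ((h₁.2.2 S hSgraded hS' hX₁S) ▸ hX₂S)
  have huS : u ∈ S := hStop ▸ trivial
  obtain ⟨a, ha, b, hb, hab⟩ := (hmemS u).1 huS
  refine le_antisymm ?_ bot_le
  intro x hx
  rw [TwoSidedIdeal.mem_inf] at hx
  rw [TwoSidedIdeal.mem_bot]
  have hax : a * x = 0 := by
    have : a * x ∈ mulClosure (X₁ : Set R) (X₂ : Set R) :=
      AddSubgroup.subset_closure ⟨a, ha, x, hx.2, rfl⟩
    rwa [h12, AddSubgroup.mem_bot] at this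
  have hbx : b * x = 0 := by
    have : b * x ∈ mulClosure (X₂ : Set R) (X₁ : Set R) :=
      AddSubgroup.subset_closure ⟨b, hb, x, hx.1, rfl⟩
    rwa [h21, AddSubgroup.mem_bot] at this
  calc x = u * x := ((hu x).1).symm
    _ = a * x + b * x := by rw [← hab, add_mul]
    _ = 0 := by rw [hax, hbx, add_zero]
end

section
/- Let R be a G-graded ring such that every proper graded ideal of R is graded weakly prime and R² = R. Then GP(R) = GN(R) and (GP(R))² = (GN(R))² = 0. -/
/-- `GP(R)`: the graded prime radical, the intersection of all graded prime ideals
(equal to all of `R` if there are no graded prime ideals). -/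
def gradedPrimeRadical {G R : Type*} [DecidableEq G] [NonUnitalRing R]
    (𝒜 : G → AddSubgroup R) [DirectSum.Decomposition 𝒜] : Set R :=
  ⋂ P ∈ {P : TwoSidedIdeal R | IsGradedPrime 𝒜 P}, (P : Set R)

/-- `GN(R)`: the sum of all graded ideals whose square is zero. -/
def gradedNilSum {G R : Type*} [DecidableEq G] [NonUnitalRing R]
    (𝒜 : G → AddSubgroup R) [DirectSum.Decomposition 𝒜] : TwoSidedIdeal R :=
  sSup {I : TwoSidedIdeal R | IsGradedIdeal 𝒜 I ∧ mulClosure (I : Set R) (I : Set R) = ⊥}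


namespace Stmt6


variable {G R : Type*} [DecidableEq G] [NonUnitalRing R]

/-- The underlying additive subgroup of a two-sided ideal. -/
def tAdd (I : TwoSidedIdeal R) : AddSubgroup R where
  carrier := I
  zero_mem' := I.zero_mem
  add_mem' := I.add_mem
  neg_mem' := I.neg_mem

@[simp] lemma mem_tAdd {I : TwoSidedIdeal R} {x : R} : x ∈ tAdd I ↔ x ∈ I := Iff.rfl

lemma mem_mulClosure_of {S T : Set R} {a b : R} (ha : a ∈ S) (hb : b ∈ T) :
    a * b ∈ mulClosure S T :=
  AddSubgroup.subset_closure ⟨a, ha, b, hb, rfl⟩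

lemma mulClosure_mono {S S' T T' : Set R} (h1 : S ⊆ S') (h2 : T ⊆ T') :
    mulClosure S T ≤ mulClosure S' T' :=
  AddSubgroup.closure_mono (by rintro _ ⟨a, ha, b, hb, rfl⟩; exact ⟨a, h1 ha, b, h2 hb, rfl⟩)

lemma mulClosure_le {S T : Set R} {A : AddSubgroup R}
    (h : ∀ a ∈ S, ∀ b ∈ T, a * b ∈ A) : mulClosure S T ≤ A :=
  (AddSubgroup.closure_le _).2 (by rintro _ ⟨a, ha, b, hb, rfl⟩; exact h a ha b hb)

lemma mulClosure_eq_bot_iff {S T : Set R} :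
    mulClosure S T = ⊥ ↔ ∀ a ∈ S, ∀ b ∈ T, a * b = 0 := by
  constructor
  · intro h a ha b hb
    have := mem_mulClosure_of ha hb
    rw [h, AddSubgroup.mem_bot] at this
    exact this
  · intro h
    rw [eq_bot_iff]
    exact mulClosure_le fun a ha b hb => by
      rw [AddSubgroup.mem_bot]; exact h a ha b hb

lemma mul_eq_zero_of_mulClosure_eq_bot {S T : Set R} (h : mulClosure S T = ⊥)
    {a b : R} (ha : a ∈ S) (hb : b ∈ T) : a * b = 0 :=
  mulClosure_eq_bot_iff.1 h a ha b hb

lemma mulClosure_subset_left (I J : TwoSidedIdeal R) :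
    (mulClosure (I : Set R) (J : Set R) : Set R) ⊆ (I : Set R) :=
  mulClosure_le (A := tAdd I) fun a ha b _ => I.mul_mem_right a b ha

lemma mulClosure_subset_right (I J : TwoSidedIdeal R) :
    (mulClosure (I : Set R) (J : Set R) : Set R) ⊆ (J : Set R) :=
  mulClosure_le (A := tAdd J) fun a _ b hb => J.mul_mem_left a b hb

/-- The product of two two-sided ideals, as a two-sided ideal. -/
def prodI (I J : TwoSidedIdeal R) : TwoSidedIdeal R :=
  TwoSidedIdeal.mk' (mulClosure (I : Set R) (J : Set R) : Set R)
    (zero_mem _) (fun hx hy => add_mem hx hy) (fun hx => neg_mem hx)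
    (fun {x y} hy => by
      refine AddSubgroup.closure_induction
        (fun z hz => ?_) (by simpa using zero_mem _)
        (fun a b _ _ ha hb => by rw [mul_add]; exact add_mem ha hb)
        (fun a _ ha => by rw [mul_neg]; exact neg_mem ha) hy
      obtain ⟨a, ha, b, hb, rfl⟩ := hz
      rw [← mul_assoc]
      exact mem_mulClosure_of (I.mul_mem_left x a ha) hb)
    (fun {x y} hx => by
      refine AddSubgroup.closure_induction
        (fun z hz => ?_) (by simpa using zero_mem _)
        (fun a b _ _ ha hb => by rw [add_mul]; exact add_mem ha hb)
        (fun a _ ha => by rw [neg_mul]; exact neg_mem ha) hx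
      obtain ⟨a, ha, b, hb, rfl⟩ := hz
      rw [mul_assoc]
      exact mem_mulClosure_of ha (J.mul_mem_right b y hb))

@[simp] lemma coe_prodI (I J : TwoSidedIdeal R) :
    (prodI I J : Set R) = (mulClosure (I : Set R) (J : Set R) : Set R) :=
  TwoSidedIdeal.coe_mk' _ _ _ _ _ _

lemma mem_prodI {I J : TwoSidedIdeal R} {x : R} :
    x ∈ prodI I J ↔ x ∈ mulClosure (I : Set R) (J : Set R) :=
  TwoSidedIdeal.mem_mk' _ _ _ _ _ _ x


variable {G R : Type*} [DecidableEq G] [NonUnitalRing R]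
  (𝒜 : G → AddSubgroup R) [DirectSum.Decomposition 𝒜]

/-- All homogeneous components lie in the set `A`. -/
def HomIn (A : Set R) (x : R) : Prop := ∀ g : G, (DirectSum.decompose 𝒜 x g : R) ∈ A

variable {𝒜}

lemma homIn_zero {A : Set R} (h0 : (0:R) ∈ A) : HomIn 𝒜 A 0 := fun g => by
  simp only [DirectSum.decompose_zero, DirectSum.zero_apply, ZeroMemClass.coe_zero]
  exact h0

lemma homIn_add {A : Set R} (hA : ∀ {x y : R}, x ∈ A → y ∈ A → x + y ∈ A) {x y : R}
    (hx : HomIn 𝒜 A x) (hy : HomIn 𝒜 A y) : HomIn 𝒜 A (x + y) := fun g => by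
  rw [DirectSum.decompose_add, DirectSum.add_apply, AddSubgroup.coe_add]
  exact hA (hx g) (hy g)

lemma homIn_neg {A : Set R} (hA : ∀ {x : R}, x ∈ A → -x ∈ A) {x : R}
    (hx : HomIn 𝒜 A x) : HomIn 𝒜 A (-x) := fun g => by
  rw [DirectSum.decompose_neg, DFinsupp.neg_apply, AddSubgroup.coe_neg]
  exact hA (hx g)

lemma homIn_of_homogeneous {A : Set R} (h0 : (0:R) ∈ A) {x : R} {g : G}
    (hx : x ∈ 𝒜 g) (hxA : x ∈ A) : HomIn 𝒜 A x := fun g' => by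
  by_cases h : g = g'
  · subst h; rw [DirectSum.decompose_of_mem_same 𝒜 hx]; exact hxA
  · rw [DirectSum.decompose_of_mem_ne 𝒜 hx h]; exact h0

lemma homIn_sum {A : Set R} (h0 : (0:R) ∈ A)
    (hA : ∀ {x y : R}, x ∈ A → y ∈ A → x + y ∈ A) {ι : Type*} {s : Finset ι} {f : ι → R}
    (h : ∀ i ∈ s, HomIn 𝒜 A (f i)) : HomIn 𝒜 A (∑ i ∈ s, f i) :=
  Finset.sum_induction f (HomIn 𝒜 A) (fun _ _ => homIn_add hA) (homIn_zero h0) h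

/-- A graded ideal yields `HomIn`. -/
lemma IsGradedIdeal.homIn {I : TwoSidedIdeal R} (hI : IsGradedIdeal 𝒜 I) {x : R}
    (hx : x ∈ I) : HomIn 𝒜 (I : Set R) x := fun g => hI x hx g

variable {G R : Type*} [DecidableEq G] [NonUnitalRing R]
  {𝒜 : G → AddSubgroup R} [DirectSum.Decomposition 𝒜]

variable [Group G]

lemma prodI_graded (hmul : ∀ ⦃g h : G⦄ ⦃x y : R⦄, x ∈ 𝒜 g → y ∈ 𝒜 h → x * y ∈ 𝒜 (g * h))
    {I J : TwoSidedIdeal R} (hI : IsGradedIdeal 𝒜 I) (hJ : IsGradedIdeal 𝒜 J) :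
    IsGradedIdeal 𝒜 (prodI I J) := by
  classical
  set M : AddSubgroup R := mulClosure (I : Set R) (J : Set R) with hM
  have key : ∀ x ∈ M, HomIn 𝒜 (M : Set R) x := by
    intro x hx
    refine AddSubgroup.closure_induction (fun z hz => ?_) (homIn_zero (zero_mem M))
      (fun a b _ _ ha hb => homIn_add (fun h1 h2 => add_mem h1 h2) ha hb)
      (fun a _ ha => homIn_neg (fun h1 => neg_mem h1) ha) hx
    obtain ⟨a, ha, b, hb, rfl⟩ := hz
    have hab : a * b =
        ∑ g ∈ (DirectSum.decompose 𝒜 a).support, ∑ h ∈ (DirectSum.decompose 𝒜 b).support,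
          (DirectSum.decompose 𝒜 a g : R) * (DirectSum.decompose 𝒜 b h : R) := by
      conv_lhs => rw [← DirectSum.sum_support_decompose 𝒜 a,
        ← DirectSum.sum_support_decompose 𝒜 b]
      rw [Finset.sum_mul]
      exact Finset.sum_congr rfl fun g _ => by rw [Finset.mul_sum]
    rw [hab]
    refine homIn_sum (zero_mem M) (fun h1 h2 => add_mem h1 h2) fun g _ => ?_
    refine homIn_sum (zero_mem M) (fun h1 h2 => add_mem h1 h2) fun h _ => ?_
    exact homIn_of_homogeneous (zero_mem M)
      (hmul (SetLike.coe_mem _) (SetLike.coe_mem _))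
      (mem_mulClosure_of (hI a ha g) (hJ b hb h))
  intro x hx g
  rw [mem_prodI] at hx
  rw [mem_prodI]
  exact key x hx g

lemma sup_graded {I J : TwoSidedIdeal R} (hI : IsGradedIdeal 𝒜 I) (hJ : IsGradedIdeal 𝒜 J) :
    IsGradedIdeal 𝒜 (I ⊔ J) := by
  intro x hx g
  obtain ⟨y, hy, z, hz, rfl⟩ := TwoSidedIdeal.mem_sup.1 hx
  rw [DirectSum.decompose_add, DirectSum.add_apply, AddSubgroup.coe_add]
  exact TwoSidedIdeal.add_mem _ (TwoSidedIdeal.mem_sup_left (hI y hy g))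
    (TwoSidedIdeal.mem_sup_right (hJ z hz g))


variable [Group G]

lemma prodI_le_left (I J : TwoSidedIdeal R) : prodI I J ≤ I :=
  fun _ hx => mulClosure_subset_left I J (mem_prodI.1 hx)

lemma ne_top_of_le {I P : TwoSidedIdeal R} (h : I ≤ P) (hP : P ≠ ⊤) : I ≠ ⊤ := by
  rintro rfl; exact hP (top_le_iff.1 h)

lemma coe_top' : ((⊤ : TwoSidedIdeal R) : Set R) = Set.univ := by
  ext x; simp [TwoSidedIdeal.mem_top]

lemma pairwise_zero
    (hwp : ∀ P : TwoSidedIdeal R, P ≠ ⊤ → IsGradedIdeal 𝒜 P → IsGradedWeaklyPrime 𝒜 P)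
    (hmul : ∀ ⦃g h : G⦄ ⦃x y : R⦄, x ∈ 𝒜 g → y ∈ 𝒜 h → x * y ∈ 𝒜 (g * h))
    (hnt : mulClosure (Set.univ : Set R) (Set.univ : Set R) ≠ ⊥)
    {I J : TwoSidedIdeal R} (hI : IsGradedIdeal 𝒜 I) (hJ : IsGradedIdeal 𝒜 J)
    (hI2 : mulClosure (I : Set R) (I : Set R) = ⊥)
    (hJ2 : mulClosure (J : Set R) (J : Set R) = ⊥) :
    mulClosure (I : Set R) (J : Set R) = ⊥ := by
  by_contra hne
  have hInetop : I ≠ ⊤ := by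
    rintro rfl
    rw [coe_top'] at hI2
    exact hnt hI2
  have wP := hwp (prodI I J) (ne_top_of_le (prodI_le_left I J) hInetop)
    (prodI_graded hmul hI hJ)
  rcases wP.2.2 I J hI hJ hne (by rw [coe_prodI]) with h | h
  · have hsub : (I : Set R) ⊆ (J : Set R) := fun x hx =>
      mulClosure_subset_right I J (mem_prodI.1 (h hx))
    have hle : mulClosure (I : Set R) (J : Set R) ≤ mulClosure (J : Set R) (J : Set R) :=
      mulClosure_mono hsub subset_rfl
    rw [hJ2] at hle
    exact hne (le_bot_iff.1 hle)
  · have hsub : (J : Set R) ⊆ (I : Set R) := fun x hx =>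
      mulClosure_subset_left I J (mem_prodI.1 (h hx))
    have hle : mulClosure (I : Set R) (J : Set R) ≤ mulClosure (I : Set R) (I : Set R) :=
      mulClosure_mono subset_rfl hsub
    rw [hI2] at hle
    exact hne (le_bot_iff.1 hle)

lemma not_prime_elim {P : TwoSidedIdeal R} (hPt : P ≠ ⊤) (hPg : IsGradedIdeal 𝒜 P)
    (h : ¬ IsGradedPrime 𝒜 P) :
    ∃ I J : TwoSidedIdeal R, IsGradedIdeal 𝒜 I ∧ IsGradedIdeal 𝒜 J ∧
      (mulClosure (I : Set R) (J : Set R) : Set R) ⊆ (P : Set R) ∧ ¬ I ≤ P ∧ ¬ J ≤ P := by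
  have h3 : ¬ ∀ I J : TwoSidedIdeal R, IsGradedIdeal 𝒜 I → IsGradedIdeal 𝒜 J →
      (mulClosure (I : Set R) (J : Set R) : Set R) ⊆ (P : Set R) → I ≤ P ∨ J ≤ P :=
    fun hall => h ⟨hPt, hPg, hall⟩
  push_neg at h3
  exact h3

lemma dichotomy
    (hwp : ∀ P : TwoSidedIdeal R, P ≠ ⊤ → IsGradedIdeal 𝒜 P → IsGradedWeaklyPrime 𝒜 P)
    {P : TwoSidedIdeal R} (hPt : P ≠ ⊤) (hPg : IsGradedIdeal 𝒜 P) :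
    IsGradedPrime 𝒜 P ∨ mulClosure (P : Set R) (P : Set R) = ⊥ := by
  by_cases hp : IsGradedPrime 𝒜 P
  · exact Or.inl hp
  right
  obtain ⟨I, J, hIg, hJg, hsub, hIP, hJP⟩ := not_prime_elim hPt hPg hp
  have wP := hwp P hPt hPg
  have hIJ0 : mulClosure (I : Set R) (J : Set R) = ⊥ := by
    by_contra hne
    rcases wP.2.2 I J hIg hJg hne hsub with h | h
    exacts [hIP h, hJP h]
  have hsubAB : (mulClosure ((I ⊔ P : TwoSidedIdeal R) : Set R)
      ((J ⊔ P : TwoSidedIdeal R) : Set R) : Set R) ⊆ (P : Set R) := by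
    refine mulClosure_le (A := tAdd P) ?_
    intro a ha b hb
    obtain ⟨i, hi, p, hp, rfl⟩ := TwoSidedIdeal.mem_sup.1 ha
    obtain ⟨j, hj, q, hq, rfl⟩ := TwoSidedIdeal.mem_sup.1 hb
    have hij : i * j = 0 := mul_eq_zero_of_mulClosure_eq_bot hIJ0 hi hj
    have e : (i + p) * (j + q) = i * j + (i * q + (p * j + p * q)) := by
      rw [add_mul, mul_add, mul_add, add_assoc]
    show (i + p) * (j + q) ∈ P
    rw [e, hij, zero_add]
    exact P.add_mem (P.mul_mem_left _ _ hq)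
      (P.add_mem (P.mul_mem_right _ _ hp) (P.mul_mem_left _ _ hq))
  have hABP : mulClosure ((I ⊔ P : TwoSidedIdeal R) : Set R)
      ((J ⊔ P : TwoSidedIdeal R) : Set R) = ⊥ := by
    by_contra hne
    rcases wP.2.2 _ _ (sup_graded hIg hPg) (sup_graded hJg hPg) hne hsubAB with h | h
    · exact hIP (le_trans le_sup_left h)
    · exact hJP (le_trans le_sup_left h)
  have hle : mulClosure (P : Set R) (P : Set R) ≤
      mulClosure ((I ⊔ P : TwoSidedIdeal R) : Set R) ((J ⊔ P : TwoSidedIdeal R) : Set R) :=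
    mulClosure_mono (fun x hx => TwoSidedIdeal.mem_sup_right hx)
      (fun x hx => TwoSidedIdeal.mem_sup_right hx)
  rw [hABP] at hle
  exact le_bot_iff.1 hle

variable (𝒜) in
/-- The additive subgroup generated by the union of all square-zero graded ideals. -/
def Wgrp : AddSubgroup R :=
  AddSubgroup.closure (⋃ I ∈ {I : TwoSidedIdeal R | IsGradedIdeal 𝒜 I ∧
    mulClosure (I : Set R) (I : Set R) = ⊥}, (I : Set R))

variable (𝒜) in
/-- `Wgrp` as a two-sided ideal. -/
def Wideal : TwoSidedIdeal R :=
  TwoSidedIdeal.mk' (Wgrp 𝒜 : Set R) (zero_mem _) (fun hx hy => add_mem hx hy)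
    (fun hx => neg_mem hx)
    (fun {x y} hy => by
      refine AddSubgroup.closure_induction (fun z hz => ?_) (by simpa using zero_mem _)
        (fun a b _ _ ha hb => by rw [mul_add]; exact add_mem ha hb)
        (fun a _ ha => by rw [mul_neg]; exact neg_mem ha) hy
      obtain ⟨s, ⟨I, rfl⟩, hs⟩ := hz
      obtain ⟨t, ⟨hIZ, rfl⟩, hz⟩ := hs
      exact AddSubgroup.subset_closure
        (Set.mem_biUnion hIZ (I.mul_mem_left x z hz)))
    (fun {x y} hx => by
      refine AddSubgroup.closure_induction (fun z hz => ?_) (by simpa using zero_mem _)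
        (fun a b _ _ ha hb => by rw [add_mul]; exact add_mem ha hb)
        (fun a _ ha => by rw [neg_mul]; exact neg_mem ha) hx
      obtain ⟨s, ⟨I, rfl⟩, hs⟩ := hz
      obtain ⟨t, ⟨hIZ, rfl⟩, hz⟩ := hs
      exact AddSubgroup.subset_closure
        (Set.mem_biUnion hIZ (I.mul_mem_right z y hz)))

lemma mem_Wideal {x : R} : x ∈ Wideal 𝒜 ↔ x ∈ Wgrp 𝒜 :=
  TwoSidedIdeal.mem_mk' _ _ _ _ _ _ x

lemma coe_Wideal : ((Wideal 𝒜 : TwoSidedIdeal R) : Set R) = (Wgrp 𝒜 : Set R) :=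
  TwoSidedIdeal.coe_mk' _ _ _ _ _ _

lemma Z_le_W {I : TwoSidedIdeal R} (hI : IsGradedIdeal 𝒜 I ∧
    mulClosure (I : Set R) (I : Set R) = ⊥) : I ≤ Wideal 𝒜 := fun x hx =>
  mem_Wideal.2 (AddSubgroup.subset_closure (Set.mem_biUnion hI hx))

lemma GN_eq_W : gradedNilSum 𝒜 = Wideal 𝒜 := by
  refine le_antisymm (sSup_le fun I hI => Z_le_W hI) fun x hx => ?_
  rw [mem_Wideal] at hx
  refine AddSubgroup.closure_induction (fun z hz => ?_)
    (TwoSidedIdeal.zero_mem _) (fun a b _ _ ha hb => TwoSidedIdeal.add_mem _ ha hb)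
    (fun a _ ha => TwoSidedIdeal.neg_mem _ ha) hx
  obtain ⟨s, ⟨I, rfl⟩, hs⟩ := hz
  obtain ⟨t, ⟨hIZ, rfl⟩, hz⟩ := hs
  exact le_sSup hIZ hz

lemma W_graded : IsGradedIdeal 𝒜 (Wideal 𝒜) := by
  intro x hx g
  rw [mem_Wideal] at hx ⊢
  refine AddSubgroup.closure_induction
    (p := fun z _ => HomIn 𝒜 (Wgrp 𝒜 : Set R) z)
    (fun z hz => ?_) (homIn_zero (zero_mem _))
    (fun a b _ _ ha hb => homIn_add (fun h1 h2 => add_mem h1 h2) ha hb)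
    (fun a _ ha => homIn_neg (fun h1 => neg_mem h1) ha) hx g
  obtain ⟨s, ⟨I, rfl⟩, hs⟩ := hz
  obtain ⟨t, ⟨hIZ, rfl⟩, hz⟩ := hs
  exact fun g' => AddSubgroup.subset_closure (Set.mem_biUnion hIZ (hIZ.1 z hz g'))

lemma W_sq
    (hwp : ∀ P : TwoSidedIdeal R, P ≠ ⊤ → IsGradedIdeal 𝒜 P → IsGradedWeaklyPrime 𝒜 P)
    (hmul : ∀ ⦃g h : G⦄ ⦃x y : R⦄, x ∈ 𝒜 g → y ∈ 𝒜 h → x * y ∈ 𝒜 (g * h))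
    (hnt : mulClosure (Set.univ : Set R) (Set.univ : Set R) ≠ ⊥) :
    mulClosure ((Wideal 𝒜 : TwoSidedIdeal R) : Set R)
      ((Wideal 𝒜 : TwoSidedIdeal R) : Set R) = ⊥ := by
  rw [coe_Wideal, mulClosure_eq_bot_iff]
  intro a ha b hb
  rw [SetLike.mem_coe] at ha hb
  refine AddSubgroup.closure_induction
    (p := fun a _ => ∀ b ∈ Wgrp 𝒜, a * b = 0) (fun z hz => ?_)
    (fun b _ => zero_mul b)
    (fun x y _ _ h1 h2 b hb => by rw [add_mul, h1 b hb, h2 b hb, add_zero])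
    (fun x _ h1 b hb => by rw [neg_mul, h1 b hb, neg_zero]) ha b hb
  obtain ⟨s, ⟨I, rfl⟩, hs⟩ := hz
  obtain ⟨t, ⟨hIZ, rfl⟩, hz⟩ := hs
  intro b hb
  refine AddSubgroup.closure_induction (fun w hw => ?_) (mul_zero z)
    (fun x y _ _ h1 h2 => by rw [mul_add, h1, h2, add_zero])
    (fun x _ h1 => by rw [mul_neg, h1, neg_zero]) hb
  obtain ⟨s, ⟨J, rfl⟩, hs⟩ := hw
  obtain ⟨t, ⟨hJZ, rfl⟩, hw⟩ := hs
  exact mul_eq_zero_of_mulClosure_eq_bot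
    (pairwise_zero hwp hmul hnt hIZ.1 hJZ.1 hIZ.2 hJZ.2) hz hw

variable (𝒜) in
/-- The graded prime radical as a two-sided ideal. -/
def GPIdeal : TwoSidedIdeal R :=
  TwoSidedIdeal.mk' (gradedPrimeRadical 𝒜)
    (Set.mem_iInter₂.2 fun P _ => P.zero_mem)
    (fun hx hy => Set.mem_iInter₂.2 fun P hP =>
      P.add_mem (Set.mem_iInter₂.1 hx P hP) (Set.mem_iInter₂.1 hy P hP))
    (fun hx => Set.mem_iInter₂.2 fun P hP => P.neg_mem (Set.mem_iInter₂.1 hx P hP))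
    (fun hy => Set.mem_iInter₂.2 fun P hP =>
      P.mul_mem_left _ _ (Set.mem_iInter₂.1 hy P hP))
    (fun hx => Set.mem_iInter₂.2 fun P hP =>
      P.mul_mem_right _ _ (Set.mem_iInter₂.1 hx P hP))

lemma coe_GPIdeal : ((GPIdeal 𝒜 : TwoSidedIdeal R) : Set R) = gradedPrimeRadical 𝒜 :=
  TwoSidedIdeal.coe_mk' _ _ _ _ _ _

lemma mem_GPIdeal {x : R} : x ∈ GPIdeal 𝒜 ↔ x ∈ gradedPrimeRadical 𝒜 :=
  TwoSidedIdeal.mem_mk' _ _ _ _ _ _ x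

lemma GPIdeal_le {P : TwoSidedIdeal R} (hP : IsGradedPrime 𝒜 P) : GPIdeal 𝒜 ≤ P :=
  fun _ hx => Set.mem_iInter₂.1 (mem_GPIdeal.1 hx) P hP

lemma GPIdeal_graded : IsGradedIdeal 𝒜 (GPIdeal 𝒜) := by
  intro x hx g
  rw [mem_GPIdeal] at hx ⊢
  exact Set.mem_iInter₂.2 fun P hP => hP.2.1 x (Set.mem_iInter₂.1 hx P hP) g

end Stmt6

/-- If every proper graded ideal of `R` is graded weakly prime and `R² = R`, then
`GP(R) = GN(R)` and `(GP(R))² = (GN(R))² = 0`. -/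
theorem stmt_6 {G R : Type*} [Group G] [DecidableEq G] [NonUnitalRing R]
    (𝒜 : G → AddSubgroup R) [DirectSum.Decomposition 𝒜]
    (hmul : ∀ ⦃g h : G⦄ ⦃x y : R⦄, x ∈ 𝒜 g → y ∈ 𝒜 h → x * y ∈ 𝒜 (g * h))
    (hwp : ∀ P : TwoSidedIdeal R, P ≠ ⊤ → IsGradedIdeal 𝒜 P → IsGradedWeaklyPrime 𝒜 P)
    (hR2 : (mulClosure (Set.univ : Set R) (Set.univ : Set R) : Set R) = Set.univ) :
    gradedPrimeRadical 𝒜 = (gradedNilSum 𝒜 : Set R) ∧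
    mulClosure (gradedPrimeRadical 𝒜) (gradedPrimeRadical 𝒜) = ⊥ ∧
    mulClosure ((gradedNilSum 𝒜 : TwoSidedIdeal R) : Set R)
      ((gradedNilSum 𝒜 : TwoSidedIdeal R) : Set R) = ⊥ := by
  classical
  by_cases hnt : Nontrivial R
  · obtain ⟨x0, hx0⟩ := exists_ne (0 : R)
    have hMuniv : mulClosure (Set.univ : Set R) (Set.univ : Set R) ≠ ⊥ := by
      intro h
      have hx : x0 ∈ (mulClosure (Set.univ : Set R) (Set.univ : Set R) : Set R) := by
        rw [hR2]; exact Set.mem_univ x0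
      rw [h, AddSubgroup.coe_bot, Set.mem_singleton_iff] at hx
      exact hx0 hx
    have hGNW : gradedNilSum 𝒜 = Stmt6.Wideal 𝒜 := Stmt6.GN_eq_W
    have hGNsq : mulClosure ((gradedNilSum 𝒜 : TwoSidedIdeal R) : Set R)
        ((gradedNilSum 𝒜 : TwoSidedIdeal R) : Set R) = ⊥ := by
      rw [hGNW]; exact Stmt6.W_sq hwp hmul hMuniv
    have hGNg : IsGradedIdeal 𝒜 (gradedNilSum 𝒜) := hGNW ▸ Stmt6.W_graded
    have hGNt : gradedNilSum 𝒜 ≠ ⊤ := by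
      intro h
      rw [h, Stmt6.coe_top'] at hGNsq
      exact hMuniv hGNsq
    have hbotsub : ∀ P : TwoSidedIdeal R, ((⊥ : AddSubgroup R) : Set R) ⊆ (P : Set R) := by
      intro P x hx
      rw [AddSubgroup.coe_bot, Set.mem_singleton_iff] at hx
      rw [SetLike.mem_coe, hx]
      exact P.zero_mem
    have hGN_le_prime : ∀ P : TwoSidedIdeal R, IsGradedPrime 𝒜 P → gradedNilSum 𝒜 ≤ P := by
      intro P hP
      have hsub : (mulClosure ((gradedNilSum 𝒜 : TwoSidedIdeal R) : Set R)
          ((gradedNilSum 𝒜 : TwoSidedIdeal R) : Set R) : Set R) ⊆ (P : Set R) := by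
        rw [hGNsq]; exact hbotsub P
      rcases hP.2.2 _ _ hGNg hGNg hsub with h | h <;> exact h
    have hZle : ∀ {I : TwoSidedIdeal R}, IsGradedIdeal 𝒜 I →
        mulClosure (I : Set R) (I : Set R) = ⊥ → I ≤ gradedNilSum 𝒜 := by
      intro I hIg hIsq
      exact hGNW ▸ Stmt6.Z_le_W ⟨hIg, hIsq⟩
    have hex : ∃ P : TwoSidedIdeal R, IsGradedPrime 𝒜 P := by
      by_contra hno
      push_neg at hno
      apply hno (gradedNilSum 𝒜)
      refine ⟨hGNt, hGNg, ?_⟩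
      intro I J hIg hJg hsub
      by_cases hb : mulClosure (I : Set R) (J : Set R) = ⊥
      · by_cases hIT : I = ⊤
        · right
          subst hIT
          have hle : mulClosure (J : Set R) (J : Set R) ≤
              mulClosure ((⊤ : TwoSidedIdeal R) : Set R) (J : Set R) :=
            Stmt6.mulClosure_mono (by rw [Stmt6.coe_top']; exact Set.subset_univ _) subset_rfl
          rw [hb] at hle
          exact hZle hJg (le_bot_iff.1 hle)
        · left
          rcases Stmt6.dichotomy hwp hIT hIg with hpr | hsq
          · exact absurd hpr (hno I)
          · exact hZle hIg hsq
      · exact (hwp _ hGNt hGNg).2.2 I J hIg hJg hb hsub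
    obtain ⟨P₁, hP₁⟩ := hex
    have hGPt : Stmt6.GPIdeal 𝒜 ≠ ⊤ := Stmt6.ne_top_of_le (Stmt6.GPIdeal_le hP₁) hP₁.1
    have hGP_sq : mulClosure ((Stmt6.GPIdeal 𝒜 : TwoSidedIdeal R) : Set R)
        ((Stmt6.GPIdeal 𝒜 : TwoSidedIdeal R) : Set R) = ⊥ := by
      rcases Stmt6.dichotomy hwp hGPt Stmt6.GPIdeal_graded with hpr | hsq
      · by_contra hMPP
        have hGNleGP : gradedNilSum 𝒜 ≤ Stmt6.GPIdeal 𝒜 := hGN_le_prime _ hpr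
        have hneq : gradedNilSum 𝒜 ≠ Stmt6.GPIdeal 𝒜 := by
          intro h; rw [← h] at hMPP; exact hMPP hGNsq
        have hGNnp : ¬ IsGradedPrime 𝒜 (gradedNilSum 𝒜) := by
          intro h
          exact hneq (le_antisymm hGNleGP (Stmt6.GPIdeal_le h))
        obtain ⟨I, J, hIg, hJg, hsub, hIP, hJP⟩ := Stmt6.not_prime_elim hGNt hGNg hGNnp
        have hIJ0 : mulClosure (I : Set R) (J : Set R) = ⊥ := by
          by_contra hb
          rcases (hwp _ hGNt hGNg).2.2 I J hIg hJg hb hsub with h | h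
          exacts [hIP h, hJP h]
        have hsubGP : (mulClosure (I : Set R) (J : Set R) : Set R) ⊆
            ((Stmt6.GPIdeal 𝒜 : TwoSidedIdeal R) : Set R) := by
          rw [hIJ0]; exact hbotsub _
        have hnotZI : mulClosure (I : Set R) (I : Set R) ≠ ⊥ :=
          fun h => hIP (hZle hIg h)
        have hnotZJ : mulClosure (J : Set R) (J : Set R) ≠ ⊥ :=
          fun h => hJP (hZle hJg h)
        have hbig : mulClosure ((Stmt6.GPIdeal 𝒜 : TwoSidedIdeal R) : Set R)
            ((Stmt6.GPIdeal 𝒜 : TwoSidedIdeal R) : Set R) ≤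
            mulClosure (I : Set R) (J : Set R) →  False := by
          intro hle
          rw [hIJ0] at hle
          exact hMPP (le_bot_iff.1 hle)
        rcases hpr.2.2 I J hIg hJg hsubGP with hI | hJ
        · have hIT : I ≠ ⊤ := Stmt6.ne_top_of_le (le_trans hI (Stmt6.GPIdeal_le hP₁)) hP₁.1
          rcases Stmt6.dichotomy hwp hIT hIg with hIpr | hIsq
          · have hIeq : (I : Set R) = ((Stmt6.GPIdeal 𝒜 : TwoSidedIdeal R) : Set R) :=
              Set.Subset.antisymm hI (Stmt6.GPIdeal_le hIpr)
            by_cases hJT : J = ⊤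
            · exact hbig (Stmt6.mulClosure_mono (hIeq ▸ subset_rfl)
                (by rw [hJT, Stmt6.coe_top']; exact Set.subset_univ _))
            · rcases Stmt6.dichotomy hwp hJT hJg with hJpr | hJsq
              · exact hbig (Stmt6.mulClosure_mono (hIeq ▸ subset_rfl)
                  (Stmt6.GPIdeal_le hJpr))
              · exact hnotZJ hJsq
          · exact hnotZI hIsq
        · have hJT : J ≠ ⊤ := Stmt6.ne_top_of_le (le_trans hJ (Stmt6.GPIdeal_le hP₁)) hP₁.1
          rcases Stmt6.dichotomy hwp hJT hJg with hJpr | hJsq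
          · have hJeq : (J : Set R) = ((Stmt6.GPIdeal 𝒜 : TwoSidedIdeal R) : Set R) :=
              Set.Subset.antisymm hJ (Stmt6.GPIdeal_le hJpr)
            by_cases hIT : I = ⊤
            · exact hbig (Stmt6.mulClosure_mono
                (by rw [hIT, Stmt6.coe_top']; exact Set.subset_univ _) (hJeq ▸ subset_rfl))
            · rcases Stmt6.dichotomy hwp hIT hIg with hIpr | hIsq
              · exact hbig (Stmt6.mulClosure_mono (Stmt6.GPIdeal_le hIpr)
                  (hJeq ▸ subset_rfl))
              · exact hnotZI hIsq
          · exact hnotZJ hJsq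
      · exact hsq
    have hGPZ : Stmt6.GPIdeal 𝒜 ≤ gradedNilSum 𝒜 :=
      hZle Stmt6.GPIdeal_graded hGP_sq
    have hseteq : gradedPrimeRadical 𝒜 = ((gradedNilSum 𝒜 : TwoSidedIdeal R) : Set R) := by
      apply Set.Subset.antisymm
      · rw [← Stmt6.coe_GPIdeal (𝒜 := 𝒜)]
        exact fun x hx => hGPZ hx
      · intro x hx
        exact Set.mem_iInter₂.2 fun P hP => hGN_le_prime P hP hx
    exact ⟨hseteq, by rw [hseteq]; exact hGNsq, hGNsq⟩
  · have hss : Subsingleton R := not_nontrivial_iff_subsingleton.mp hnt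
    have hbot : ∀ A : AddSubgroup R, A = ⊥ := fun A => by
      ext x
      have hx : x = 0 := Subsingleton.elim x 0
      subst hx
      simpa using A.zero_mem
    refine ⟨?_, hbot _, hbot _⟩
    ext x
    have hx : x = (0 : R) := Subsingleton.elim x 0
    subst hx
    simp only [gradedPrimeRadical, Set.mem_iInter, SetLike.mem_coe]
    exact ⟨fun _ => (gradedNilSum 𝒜).zero_mem, fun _ P _ => P.zero_mem⟩
end

section
/- Let R be a G-graded ring such that every proper graded ideal of R is graded weakly prime. Then every nonzero graded ideal of R/GN(R) is graded prime; equivalently, every proper graded ideal K of R with GN(R) ⊊ K is a graded prime ideal of R. -/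
/-!
If `K` is graded weakly prime but some graded `I, J ⊄ K` have `IJ = 0`, then
`(I + K)(J + K) ⊆ K`, and weak primality forces `(I + K)(J + K) = 0` since neither factor lies
in `K`; in particular `K² = 0`, i.e. `K ≤ GN(R)`. So a graded ideal strictly above `GN(R)`
which is graded weakly prime is graded prime.
-/

section MulClosure

variable {R : Type*} [NonUnitalRing R]

lemma coe_mulClosure_subset_iff {S : Type*} [SetLike S R] [AddSubgroupClass S R] {A B : Set R}
    {P : S} : (mulClosure A B : Set R) ⊆ P ↔ ∀ a ∈ A, ∀ b ∈ B, a * b ∈ P := by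
  refine ⟨fun h a ha b hb => h (AddSubgroup.subset_closure ⟨a, ha, b, hb, rfl⟩), fun h x hx => ?_⟩
  induction hx using AddSubgroup.closure_induction with
  | mem x hx => obtain ⟨a, ha, b, hb, rfl⟩ := hx; exact h a ha b hb
  | zero => exact zero_mem P
  | add x y _ _ hx hy => exact add_mem hx hy
  | neg x _ hx => exact neg_mem hx

lemma mulClosure_mono {A A' B B' : Set R} (hA : A ⊆ A') (hB : B ⊆ B') :
    mulClosure A B ≤ mulClosure A' B' :=
  AddSubgroup.closure_mono fun _ ⟨a, ha, b, hb, hab⟩ => ⟨a, hA ha, b, hB hb, hab⟩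

lemma coe_mulClosure_sup_sup_subset {I J K : TwoSidedIdeal R}
    (h : (mulClosure (I : Set R) J : Set R) ⊆ K) :
    (mulClosure ((I ⊔ K : TwoSidedIdeal R) : Set R) (J ⊔ K : TwoSidedIdeal R) : Set R) ⊆ K := by
  rw [coe_mulClosure_subset_iff] at h ⊢
  intro a ha b hb
  obtain ⟨y, hy, z, hz, rfl⟩ := TwoSidedIdeal.mem_sup.1 ha
  obtain ⟨u, hu, v, hv, rfl⟩ := TwoSidedIdeal.mem_sup.1 hb
  rw [add_mul, mul_add]
  exact add_mem (add_mem (h y hy u hu) (K.mul_mem_left _ _ hv)) (K.mul_mem_right _ _ hz)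

end MulClosure

section Graded

variable {G R : Type*} [DecidableEq G] [NonUnitalRing R] {𝒜 : G → AddSubgroup R}
  [DirectSum.Decomposition 𝒜]

lemma IsGradedIdeal.sup {I J : TwoSidedIdeal R} (hI : IsGradedIdeal 𝒜 I)
    (hJ : IsGradedIdeal 𝒜 J) : IsGradedIdeal 𝒜 (I ⊔ J) := by
  intro x hx g
  obtain ⟨y, hy, z, hz, rfl⟩ := TwoSidedIdeal.mem_sup.1 hx
  rw [DirectSum.decompose_add, DirectSum.add_apply, AddSubgroup.coe_add]
  exact add_mem (TwoSidedIdeal.mem_sup_left (hI y hy g)) (TwoSidedIdeal.mem_sup_right (hJ z hz g))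

lemma le_gradedNilSum {K : TwoSidedIdeal R} (hK : IsGradedIdeal 𝒜 K)
    (hKK : mulClosure (K : Set R) K = ⊥) : K ≤ gradedNilSum 𝒜 :=
  le_sSup ⟨hK, hKK⟩

lemma IsGradedWeaklyPrime.mulClosure_self_eq_bot {K I J : TwoSidedIdeal R}
    (hK : IsGradedWeaklyPrime 𝒜 K) (hI : IsGradedIdeal 𝒜 I) (hJ : IsGradedIdeal 𝒜 J)
    (hIJ : mulClosure (I : Set R) J = ⊥) (hIK : ¬I ≤ K) (hJK : ¬J ≤ K) :
    mulClosure (K : Set R) K = ⊥ := by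
  have hsub : (mulClosure ((I ⊔ K : TwoSidedIdeal R) : Set R) (J ⊔ K : TwoSidedIdeal R) : Set R)
      ⊆ K := coe_mulClosure_sup_sup_subset (by simp [hIJ, zero_mem])
  have hIJK : mulClosure ((I ⊔ K : TwoSidedIdeal R) : Set R) (J ⊔ K : TwoSidedIdeal R) = ⊥ := by
    by_contra hne
    rcases hK.2.2 _ _ (hI.sup hK.2.1) (hJ.sup hK.2.1) hne hsub with h | h
    · exact hIK (le_sup_left.trans h)
    · exact hJK (le_sup_left.trans h)
  exact le_bot_iff.1 <| hIJK ▸ mulClosure_mono (fun _ => TwoSidedIdeal.mem_sup_right)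
    (fun _ => TwoSidedIdeal.mem_sup_right)

lemma IsGradedWeaklyPrime.isGradedPrime {K : TwoSidedIdeal R} (hK : IsGradedWeaklyPrime 𝒜 K)
    (hKK : mulClosure (K : Set R) K ≠ ⊥) : IsGradedPrime 𝒜 K := by
  refine ⟨hK.1, hK.2.1, fun I J hI hJ hIJ => ?_⟩
  by_cases h0 : mulClosure (I : Set R) J = ⊥
  · by_contra! hcon
    exact hKK (hK.mulClosure_self_eq_bot hI hJ h0 hcon.1 hcon.2)
  · exact hK.2.2 I J hI hJ h0 hIJ

end Graded

theorem stmt_7_general {G R : Type*} [DecidableEq G] [NonUnitalRing R]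
    (𝒜 : G → AddSubgroup R) [DirectSum.Decomposition 𝒜]
    (hwp : ∀ P : TwoSidedIdeal R, P ≠ ⊤ → IsGradedIdeal 𝒜 P → IsGradedWeaklyPrime 𝒜 P) :
    ∀ K : TwoSidedIdeal R, IsGradedIdeal 𝒜 K → K ≠ ⊤ → gradedNilSum 𝒜 < K →
      IsGradedPrime 𝒜 K := by
  intro K hK hKtop hlt
  refine (hwp K hKtop hK).isGradedPrime fun hKK => ?_
  exact hlt.not_ge (le_gradedNilSum hK hKK)

/-- If every proper graded ideal of `R` is graded weakly prime, then every nonzero graded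
ideal of `R/GN(R)` is graded prime; equivalently, every proper graded ideal `K` of `R`
with `GN(R) ⊊ K` is a graded prime ideal of `R`. -/
theorem stmt_7 {G R : Type*} [Group G] [DecidableEq G] [NonUnitalRing R]
    (𝒜 : G → AddSubgroup R) [DirectSum.Decomposition 𝒜]
    (hmul : ∀ ⦃g h : G⦄ ⦃x y : R⦄, x ∈ 𝒜 g → y ∈ 𝒜 h → x * y ∈ 𝒜 (g * h))
    (hwp : ∀ P : TwoSidedIdeal R, P ≠ ⊤ → IsGradedIdeal 𝒜 P → IsGradedWeaklyPrime 𝒜 P) :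
    ∀ K : TwoSidedIdeal R, IsGradedIdeal 𝒜 K → K ≠ ⊤ → gradedNilSum 𝒜 < K →
      IsGradedPrime 𝒜 K :=
  stmt_7_general 𝒜 hwp
end

section
/- Let R be a G-graded ring such that every proper graded ideal of R is graded weakly prime. Then (GN(R))² = 0 and every graded prime ideal of R contains GN(R). -/
section MulClosure

variable {R : Type*} [NonUnitalRing R]

lemma mul_mem_mulClosure {S T : Set R} {a b : R} (ha : a ∈ S) (hb : b ∈ T) :
    a * b ∈ mulClosure S T :=
  AddSubgroup.subset_closure ⟨a, ha, b, hb, rfl⟩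

lemma mulClosure_le_iff {S T : Set R} {H : AddSubgroup R} :
    mulClosure S T ≤ H ↔ ∀ a ∈ S, ∀ b ∈ T, a * b ∈ H := by
  simp only [mulClosure, AddSubgroup.closure_le]
  exact ⟨fun h a ha b hb => h ⟨a, ha, b, hb, rfl⟩, fun h _ ⟨a, ha, b, hb, hab⟩ => hab ▸ h a ha b hb⟩

lemma mulClosure_mono_s8 {S S' T T' : Set R} (hS : S ⊆ S') (hT : T ⊆ T') :
    mulClosure S T ≤ mulClosure S' T' :=
  AddSubgroup.closure_mono fun _ ⟨a, ha, b, hb, h⟩ => ⟨a, hS ha, b, hT hb, h⟩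

lemma mulClosure_eq_bot_iff {S T : Set R} :
    mulClosure S T = ⊥ ↔ ∀ a ∈ S, ∀ b ∈ T, a * b = 0 := by
  simp only [← le_bot_iff, mulClosure_le_iff, AddSubgroup.mem_bot]

lemma mulClosure_subset_s8 {S T : Set R} {K : TwoSidedIdeal R}
    (h : ∀ a ∈ S, ∀ b ∈ T, a * b ∈ K) : (mulClosure S T : Set R) ⊆ K :=
  mulClosure_le_iff (H := AddSubgroup.ofClass K) |>.2 h

end MulClosure

namespace TwoSidedIdeal

variable {R : Type*} [NonUnitalRing R]

lemma mul_mem_mulClosure_left (I : TwoSidedIdeal R) (T : Set R) (x : R) {y : R}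
    (hy : y ∈ mulClosure (I : Set R) T) : x * y ∈ mulClosure (I : Set R) T := by
  have := (AddMonoidHom.mulLeft x).map_closure _ ▸ AddSubgroup.mem_map_of_mem _ hy
  refine AddSubgroup.closure_mono ?_ this
  rintro - ⟨-, ⟨a, ha, b, hb, rfl⟩, rfl⟩
  exact ⟨x * a, I.mul_mem_left x a ha, b, hb, mul_assoc x a b⟩

lemma mul_mem_mulClosure_right (S : Set R) (J : TwoSidedIdeal R) {x : R} (y : R)
    (hx : x ∈ mulClosure S (J : Set R)) : x * y ∈ mulClosure S (J : Set R) := by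
  have := (AddMonoidHom.mulRight y).map_closure _ ▸ AddSubgroup.mem_map_of_mem _ hx
  refine AddSubgroup.closure_mono ?_ this
  rintro - ⟨-, ⟨a, ha, b, hb, rfl⟩, rfl⟩
  exact ⟨a, ha, b * y, J.mul_mem_right b y hb, (mul_assoc a b y).symm⟩

def mulIdeal (I J : TwoSidedIdeal R) : TwoSidedIdeal R :=
  .mk' (mulClosure (I : Set R) (J : Set R))
    (AddSubgroup.zero_mem _) (AddSubgroup.add_mem _) (AddSubgroup.neg_mem _)
    (I.mul_mem_mulClosure_left _ _) (J.mul_mem_mulClosure_right _ _)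

@[simp]
lemma coe_mulIdeal (I J : TwoSidedIdeal R) :
    (I.mulIdeal J : Set R) = mulClosure (I : Set R) (J : Set R) :=
  coe_mk' _ _ _ _ _ _

lemma mulIdeal_le_left (I J : TwoSidedIdeal R) : I.mulIdeal J ≤ I := by
  rw [le_iff, coe_mulIdeal]
  exact mulClosure_subset_s8 fun a ha b _ => I.mul_mem_right a b ha

lemma mulIdeal_le_right (I J : TwoSidedIdeal R) : I.mulIdeal J ≤ J := by
  rw [le_iff, coe_mulIdeal]
  exact mulClosure_subset_s8 fun a _ b hb => J.mul_mem_left a b hb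

def leftAnnihilator (J : TwoSidedIdeal R) : TwoSidedIdeal R :=
  .mk' {x | ∀ y ∈ J, x * y = 0} (fun y _ => zero_mul y)
    (fun hx hx' y hy => by rw [add_mul, hx y hy, hx' y hy, add_zero])
    (fun hx y hy => by rw [neg_mul, hx y hy, neg_zero])
    (fun {z _} hx y hy => by rw [mul_assoc, hx y hy, mul_zero])
    (fun {_ z} hx y hy => by rw [mul_assoc, hx _ (J.mul_mem_left z y hy)])

def rightAnnihilator (I : TwoSidedIdeal R) : TwoSidedIdeal R :=
  .mk' {y | ∀ x ∈ I, x * y = 0} (fun x _ => mul_zero x)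
    (fun hy hy' x hx => by rw [mul_add, hy x hx, hy' x hx, add_zero])
    (fun hy x hx => by rw [mul_neg, hy x hx, neg_zero])
    (fun {z _} hy x hx => by rw [← mul_assoc, hy _ (I.mul_mem_right x z hx)])
    (fun {_ z} hy x hx => by rw [← mul_assoc, hy x hx, zero_mul])

lemma mem_leftAnnihilator {J : TwoSidedIdeal R} {x : R} :
    x ∈ J.leftAnnihilator ↔ ∀ y ∈ J, x * y = 0 :=
  mem_mk' _ _ _ _ _ _ x

lemma mem_rightAnnihilator {I : TwoSidedIdeal R} {y : R} :
    y ∈ I.rightAnnihilator ↔ ∀ x ∈ I, x * y = 0 :=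
  mem_mk' _ _ _ _ _ _ y

lemma mulClosure_sSup_eq_bot {S : Set (TwoSidedIdeal R)}
    (h : ∀ I ∈ S, ∀ J ∈ S, mulClosure (I : Set R) (J : Set R) = ⊥) :
    mulClosure ((sSup S : TwoSidedIdeal R) : Set R) ((sSup S : TwoSidedIdeal R) : Set R) = ⊥ := by
  simp only [mulClosure_eq_bot_iff, SetLike.mem_coe] at h ⊢
  have hleft (J : TwoSidedIdeal R) (hJ : J ∈ S) : sSup S ≤ J.leftAnnihilator :=
    sSup_le fun I hI x hx => mem_leftAnnihilator.2 (h I hI J hJ x hx)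
  have hright : sSup S ≤ (sSup S).rightAnnihilator :=
    sSup_le fun J hJ y hy => mem_rightAnnihilator.2 fun x hx =>
      mem_leftAnnihilator.1 (hleft J hJ hx) y hy
  exact fun x hx y hy => mem_rightAnnihilator.1 (hright hy) x hx

end TwoSidedIdeal

section Graded

variable {G R : Type*} [DecidableEq G] [NonUnitalRing R]
  (𝒜 : G → AddSubgroup R) [DirectSum.Decomposition 𝒜]

def componentHom (k : G) : R →+ R where
  toFun x := (DirectSum.decompose 𝒜 x k : R)
  map_zero' := by simp
  map_add' x y := by simp

@[simp]
lemma componentHom_apply (k : G) (x : R) :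
    componentHom 𝒜 k x = (DirectSum.decompose 𝒜 x k : R) :=
  rfl

variable {𝒜}

lemma component_mul_mem_mulClosure [Mul G]
    (hmul : ∀ ⦃g h : G⦄ ⦃x y : R⦄, x ∈ 𝒜 g → y ∈ 𝒜 h → x * y ∈ 𝒜 (g * h))
    {I J : TwoSidedIdeal R} (hI : IsGradedIdeal 𝒜 I) (hJ : IsGradedIdeal 𝒜 J)
    {a b : R} (ha : a ∈ I) (hb : b ∈ J) (k : G) :
    (DirectSum.decompose 𝒜 (a * b) k : R) ∈ mulClosure (I : Set R) (J : Set R) := by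
  classical
  have hab : a * b = ∑ g ∈ (DirectSum.decompose 𝒜 a).support,
      ∑ h ∈ (DirectSum.decompose 𝒜 b).support,
        (DirectSum.decompose 𝒜 a g : R) * (DirectSum.decompose 𝒜 b h : R) := by
    rw [← Finset.sum_mul_sum, DirectSum.sum_support_decompose,
      DirectSum.sum_support_decompose]
  rw [← componentHom_apply, hab, map_sum]
  refine sum_mem fun g _ => ?_
  rw [map_sum]
  refine sum_mem fun h _ => ?_
  have hgh := hmul (DirectSum.decompose 𝒜 a g).2 (DirectSum.decompose 𝒜 b h).2
  rw [componentHom_apply]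
  by_cases hk : g * h = k
  · rw [← hk, DirectSum.decompose_of_mem_same 𝒜 hgh]
    exact mul_mem_mulClosure (hI a ha g) (hJ b hb h)
  · rw [DirectSum.decompose_of_mem_ne 𝒜 hgh hk]
    exact zero_mem _

lemma isGradedIdeal_mulIdeal [Mul G]
    (hmul : ∀ ⦃g h : G⦄ ⦃x y : R⦄, x ∈ 𝒜 g → y ∈ 𝒜 h → x * y ∈ 𝒜 (g * h))
    {I J : TwoSidedIdeal R} (hI : IsGradedIdeal 𝒜 I) (hJ : IsGradedIdeal 𝒜 J) :
    IsGradedIdeal 𝒜 (I.mulIdeal J) := by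
  have hle : mulClosure (I : Set R) (J : Set R) ≤
      ⨅ k, (mulClosure (I : Set R) (J : Set R)).comap (componentHom 𝒜 k) :=
    mulClosure_le_iff.2 fun a ha b hb => AddSubgroup.mem_iInf.2 fun k =>
      component_mul_mem_mulClosure hmul hI hJ ha hb k
  intro x hx k
  rw [← SetLike.mem_coe, TwoSidedIdeal.coe_mulIdeal] at hx ⊢
  exact AddSubgroup.mem_iInf.1 (hle hx) k

lemma mulClosure_eq_bot_of_sq_eq_bot [Mul G]
    (hmul : ∀ ⦃g h : G⦄ ⦃x y : R⦄, x ∈ 𝒜 g → y ∈ 𝒜 h → x * y ∈ 𝒜 (g * h))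
    (hwp : ∀ P : TwoSidedIdeal R, P ≠ ⊤ → IsGradedIdeal 𝒜 P → IsGradedWeaklyPrime 𝒜 P)
    {I J : TwoSidedIdeal R} (hI : IsGradedIdeal 𝒜 I) (hJ : IsGradedIdeal 𝒜 J)
    (hI2 : mulClosure (I : Set R) (I : Set R) = ⊥)
    (hJ2 : mulClosure (J : Set R) (J : Set R) = ⊥) :
    mulClosure (I : Set R) (J : Set R) = ⊥ := by
  by_contra hne
  have hIJ : ¬ I ≤ J := fun h => hne (le_bot_iff.1 (hJ2 ▸ mulClosure_mono_s8 h subset_rfl))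
  have hJI : ¬ J ≤ I := fun h => hne (le_bot_iff.1 (hI2 ▸ mulClosure_mono_s8 subset_rfl h))
  set K := I.mulIdeal J
  have hKtop : K ≠ ⊤ := fun h => hJI ((le_top.trans_eq h.symm).trans (I.mulIdeal_le_left J))
  obtain ⟨-, -, hK⟩ := hwp K hKtop (isGradedIdeal_mulIdeal hmul hI hJ)
  rcases hK I J hI hJ hne (I.coe_mulIdeal J).ge with h | h
  · exact hIJ (h.trans (I.mulIdeal_le_right J))
  · exact hJI (h.trans (I.mulIdeal_le_left J))

lemma mulClosure_gradedNilSum_eq_bot [Mul G]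
    (hmul : ∀ ⦃g h : G⦄ ⦃x y : R⦄, x ∈ 𝒜 g → y ∈ 𝒜 h → x * y ∈ 𝒜 (g * h))
    (hwp : ∀ P : TwoSidedIdeal R, P ≠ ⊤ → IsGradedIdeal 𝒜 P → IsGradedWeaklyPrime 𝒜 P) :
    mulClosure (gradedNilSum 𝒜 : Set R) (gradedNilSum 𝒜 : Set R) = ⊥ :=
  TwoSidedIdeal.mulClosure_sSup_eq_bot fun _ ⟨hI, hI2⟩ _ ⟨hJ, hJ2⟩ =>
    mulClosure_eq_bot_of_sq_eq_bot hmul hwp hI hJ hI2 hJ2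

lemma IsGradedPrime.gradedNilSum_le {P : TwoSidedIdeal R} (hP : IsGradedPrime 𝒜 P) :
    gradedNilSum 𝒜 ≤ P := by
  refine sSup_le fun I ⟨hI, hI2⟩ => ?_
  have hsub : (mulClosure (I : Set R) (I : Set R) : Set R) ⊆ P := by
    rw [hI2, AddSubgroup.coe_bot, Set.singleton_subset_iff]
    exact P.zero_mem
  exact (hP.2.2 I I hI hI hsub).elim id id

end Graded

/-- If every proper graded ideal of `R` is graded weakly prime, then `(GN(R))² = 0` and
every graded prime ideal of `R` contains `GN(R)`. -/
theorem stmt_8 {G R : Type*} [Group G] [DecidableEq G] [NonUnitalRing R]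
    (𝒜 : G → AddSubgroup R) [DirectSum.Decomposition 𝒜]
    (hmul : ∀ ⦃g h : G⦄ ⦃x y : R⦄, x ∈ 𝒜 g → y ∈ 𝒜 h → x * y ∈ 𝒜 (g * h))
    (hwp : ∀ P : TwoSidedIdeal R, P ≠ ⊤ → IsGradedIdeal 𝒜 P → IsGradedWeaklyPrime 𝒜 P) :
    mulClosure ((gradedNilSum 𝒜 : TwoSidedIdeal R) : Set R)
      ((gradedNilSum 𝒜 : TwoSidedIdeal R) : Set R) = ⊥ ∧
    ∀ P : TwoSidedIdeal R, IsGradedPrime 𝒜 P → gradedNilSum 𝒜 ≤ P :=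
  ⟨mulClosure_gradedNilSum_eq_bot hmul hwp, fun _ hP => hP.gradedNilSum_le⟩
end

section
/- For a proper graded ideal P of a G-graded ring R, the set S = h(R) \ P is a graded weakly system if and only if P is a graded weakly prime ideal of R. -/
/-- A set `S` of nonzero homogeneous elements is a graded weakly system if for all graded
ideals `I`, `J` with `I ∩ S ≠ ∅`, `J ∩ S ≠ ∅` and `IJ ≠ 0`, one has `IJ ∩ S ≠ ∅`. -/
def IsGradedWeaklySystem {G R : Type*} [DecidableEq G] [NonUnitalRing R]
    (𝒜 : G → AddSubgroup R) [DirectSum.Decomposition 𝒜] (S : Set R) : Prop :=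
  (∀ s ∈ S, SetLike.IsHomogeneousElem 𝒜 s) ∧ (0 : R) ∉ S ∧
    ∀ I J : TwoSidedIdeal R, IsGradedIdeal 𝒜 I → IsGradedIdeal 𝒜 J →
      ((I : Set R) ∩ S).Nonempty → ((J : Set R) ∩ S).Nonempty →
      mulClosure (I : Set R) (J : Set R) ≠ ⊥ →
      ((mulClosure (I : Set R) (J : Set R) : Set R) ∩ S).Nonempty

open DirectSum

section
variable {G R : Type*} [DecidableEq G] [NonUnitalRing R] (𝒜 : G → AddSubgroup R)
  [Decomposition 𝒜]

theorem mem_of_forall_decompose_mem {S : Type*} [SetLike S R] [AddSubmonoidClass S R]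
    {P : S} {x : R} (h : ∀ g, (decompose 𝒜 x g : R) ∈ P) : x ∈ P := by
  classical
  rw [← sum_support_decompose 𝒜 x]
  exact sum_mem fun g _ => h g

theorem exists_isHomogeneousElem_mem_notMem {S : Type*} [SetLike S R] [AddSubmonoidClass S R]
    {A : Set R} (hA : ∀ x ∈ A, ∀ g, (decompose 𝒜 x g : R) ∈ A) {P : S} {x : R}
    (hxA : x ∈ A) (hxP : x ∉ P) : ∃ y ∈ A, SetLike.IsHomogeneousElem 𝒜 y ∧ y ∉ P := by
  obtain ⟨g, hg⟩ : ∃ g, (decompose 𝒜 x g : R) ∉ P := by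
    by_contra! h
    exact hxP (mem_of_forall_decompose_mem 𝒜 h)
  exact ⟨_, hA x hxA g, ⟨g, (decompose 𝒜 x g).2⟩, hg⟩

theorem IsGradedIdeal.exists_isHomogeneousElem_mem_notMem {I P : TwoSidedIdeal R}
    (hI : IsGradedIdeal 𝒜 I) (hIP : ¬I ≤ P) :
    ∃ y ∈ I, SetLike.IsHomogeneousElem 𝒜 y ∧ y ∉ P := by
  obtain ⟨x, hxI, hxP⟩ := SetLike.not_le_iff_exists.mp hIP
  exact _root_.exists_isHomogeneousElem_mem_notMem 𝒜 (A := I) hI hxI hxP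

variable {𝒜} [Mul G]

theorem decompose_mul_mem_mulClosure
    (hmul : ∀ ⦃g h : G⦄ ⦃x y : R⦄, x ∈ 𝒜 g → y ∈ 𝒜 h → x * y ∈ 𝒜 (g * h)) {S T : Set R}
    (hS : ∀ x ∈ S, ∀ g, (decompose 𝒜 x g : R) ∈ S)
    (hT : ∀ x ∈ T, ∀ g, (decompose 𝒜 x g : R) ∈ T) {a b : R} (ha : a ∈ S) (hb : b ∈ T)
    (g : G) : (decompose 𝒜 (a * b) g : R) ∈ mulClosure S T := by
  classical
  have hab : a * b = ∑ h ∈ (decompose 𝒜 a).support, ∑ k ∈ (decompose 𝒜 b).support,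
      (decompose 𝒜 a h : R) * (decompose 𝒜 b k : R) := by
    conv_lhs => rw [← sum_support_decompose 𝒜 a, ← sum_support_decompose 𝒜 b]
    rw [Finset.sum_mul_sum]
  rw [hab, decompose_sum, DFinsupp.finsetSum_apply, AddSubmonoidClass.coe_finsetSum]
  refine sum_mem fun h _ => ?_
  rw [decompose_sum, DFinsupp.finsetSum_apply, AddSubmonoidClass.coe_finsetSum]
  refine sum_mem fun k _ => ?_
  have hmem : (decompose 𝒜 a h : R) * (decompose 𝒜 b k : R) ∈ 𝒜 (h * k) :=
    hmul (decompose 𝒜 a h).2 (decompose 𝒜 b k).2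
  by_cases hg : h * k = g
  · rw [← hg, decompose_of_mem_same 𝒜 hmem]
    exact AddSubgroup.subset_closure ⟨_, hS a ha h, _, hT b hb k, rfl⟩
  · rw [decompose_of_mem_ne 𝒜 hmem hg]
    exact zero_mem _

theorem decompose_mem_mulClosure
    (hmul : ∀ ⦃g h : G⦄ ⦃x y : R⦄, x ∈ 𝒜 g → y ∈ 𝒜 h → x * y ∈ 𝒜 (g * h)) {S T : Set R}
    (hS : ∀ x ∈ S, ∀ g, (decompose 𝒜 x g : R) ∈ S)
    (hT : ∀ x ∈ T, ∀ g, (decompose 𝒜 x g : R) ∈ T) :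
    ∀ x ∈ mulClosure S T, ∀ g, (decompose 𝒜 x g : R) ∈ mulClosure S T := by
  intro x hx g
  induction hx using AddSubgroup.closure_induction with
  | mem x hx =>
    obtain ⟨a, ha, b, hb, rfl⟩ := hx
    exact decompose_mul_mem_mulClosure hmul hS hT ha hb g
  | zero => simp
  | add x y _ _ hx hy =>
    rw [decompose_add, DFinsupp.add_apply, AddSubgroup.coe_add]
    exact add_mem hx hy
  | neg x _ hx =>
    rw [decompose_neg, DFinsupp.neg_apply, AddSubgroup.coe_neg]
    exact neg_mem hx

end

/-- For a proper graded ideal `P` of `R`, the set `S = h(R) \ P` is a graded weakly system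
iff `P` is a graded weakly prime ideal of `R`. -/
theorem stmt_9 {G R : Type*} [Group G] [DecidableEq G] [NonUnitalRing R]
    (𝒜 : G → AddSubgroup R) [DirectSum.Decomposition 𝒜]
    (hmul : ∀ ⦃g h : G⦄ ⦃x y : R⦄, x ∈ 𝒜 g → y ∈ 𝒜 h → x * y ∈ 𝒜 (g * h))
    (P : TwoSidedIdeal R) (hP : IsGradedIdeal 𝒜 P) (hproper : P ≠ ⊤) :
    IsGradedWeaklySystem 𝒜 ({x : R | SetLike.IsHomogeneousElem 𝒜 x} \ (P : Set R)) ↔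
      IsGradedWeaklyPrime 𝒜 P := by
  constructor
  · rintro ⟨-, -, hS⟩
    refine ⟨hproper, hP, fun I J hI hJ hne hsub => ?_⟩
    by_contra! ⟨hIP, hJP⟩
    obtain ⟨x, hxI, hx⟩ := hI.exists_isHomogeneousElem_mem_notMem 𝒜 hIP
    obtain ⟨y, hyJ, hy⟩ := hJ.exists_isHomogeneousElem_mem_notMem 𝒜 hJP
    obtain ⟨z, hz, -, hzP⟩ := hS I J hI hJ ⟨x, hxI, hx⟩ ⟨y, hyJ, hy⟩ hne
    exact hzP (hsub hz)
  · rintro ⟨-, -, hprime⟩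
    refine ⟨fun s hs => hs.1, fun h0 => h0.2 P.zero_mem, ?_⟩
    rintro I J hI hJ ⟨x, hxI, -, hxP⟩ ⟨y, hyJ, -, hyP⟩ hne
    have hIJ : ¬(mulClosure (I : Set R) (J : Set R) : Set R) ⊆ P := fun hsub =>
      (hprime I J hI hJ hne hsub).elim (fun h => hxP (h hxI)) (fun h => hyP (h hyJ))
    obtain ⟨z, hz, hzP⟩ := Set.not_subset.mp hIJ
    obtain ⟨w, hw, hwP⟩ :=
      exists_isHomogeneousElem_mem_notMem 𝒜 (decompose_mem_mulClosure hmul hI hJ) hz hzP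
    exact ⟨w, hw, hwP⟩
end

section
/- Let P be a g-weakly total prime ideal of R and suppose (x, y) is a g-total twin-zero of P. Then x·p = 0 for every p ∈ P_g and p·y = 0 for every p ∈ P_g (i.e., xP_g = P_g y = 0). -/
/-- A graded ideal `P` with `P ∩ R_g ≠ R_g` is `g`-weakly total prime if for all
`x, y ∈ R_g`, `0 ≠ xy ∈ P` implies `x ∈ P` or `y ∈ P`. -/
def IsGWeaklyTotalPrime {G R : Type*} [DecidableEq G] [NonUnitalRing R]
    (𝒜 : G → AddSubgroup R) [DirectSum.Decomposition 𝒜] (g : G)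
    (P : TwoSidedIdeal R) : Prop :=
  IsGradedIdeal 𝒜 P ∧ ¬ ((𝒜 g : Set R) ⊆ (P : Set R)) ∧
    ∀ x ∈ 𝒜 g, ∀ y ∈ 𝒜 g, x * y ≠ 0 → x * y ∈ P → x ∈ P ∨ y ∈ P

/-- A graded ideal `P` with `P ∩ R_g ≠ R_g` is `g`-total prime if for all `x, y ∈ R_g`,
`xy ∈ P` implies `x ∈ P` or `y ∈ P`. -/
def IsGTotalPrime {G R : Type*} [DecidableEq G] [NonUnitalRing R]
    (𝒜 : G → AddSubgroup R) [DirectSum.Decomposition 𝒜] (g : G)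
    (P : TwoSidedIdeal R) : Prop :=
  IsGradedIdeal 𝒜 P ∧ ¬ ((𝒜 g : Set R) ⊆ (P : Set R)) ∧
    ∀ x ∈ 𝒜 g, ∀ y ∈ 𝒜 g, x * y ∈ P → x ∈ P ∨ y ∈ P

/-- If `P` is a `g`-weakly total prime ideal of `R` and `(x, y)` is a `g`-total twin-zero
of `P`, then `xP_g = P_g y = 0`. -/
theorem stmt_12 {G R : Type*} [Group G] [DecidableEq G] [NonUnitalRing R]
    (𝒜 : G → AddSubgroup R) [DirectSum.Decomposition 𝒜]
    (hmul : ∀ ⦃g h : G⦄ ⦃a b : R⦄, a ∈ 𝒜 g → b ∈ 𝒜 h → a * b ∈ 𝒜 (g * h))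
    (g : G) (P : TwoSidedIdeal R) (hP : IsGWeaklyTotalPrime 𝒜 g P)
    (x y : R) (hx : x ∈ 𝒜 g) (hy : y ∈ 𝒜 g) (hxy : x * y = 0)
    (hxP : x ∉ P) (hyP : y ∉ P) :
    ∀ p : R, p ∈ P → p ∈ 𝒜 g → x * p = 0 ∧ p * y = 0 := by
  obtain ⟨-, -, hprime⟩ := hP
  intro p hpP hpg
  constructor
  · by_contra hne
    have key : x * (y + p) = x * p := by rw [mul_add, hxy, zero_add]
    have h1 : x * (y + p) ∈ P := by rw [key]; exact P.mul_mem_left x p hpP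
    have h2 : x * (y + p) ≠ 0 := by rw [key]; exact hne
    rcases hprime x hx (y + p) (add_mem hy hpg) h2 h1 with h | h
    · exact hxP h
    · exact hyP (by simpa using P.sub_mem h hpP)
  · by_contra hne
    have key : (x + p) * y = p * y := by rw [add_mul, hxy, zero_add]
    have h1 : (x + p) * y ∈ P := by rw [key]; exact P.mul_mem_right p y hpP
    have h2 : (x + p) * y ≠ 0 := by rw [key]; exact hne
    rcases hprime (x + p) (add_mem hx hpg) y hy h2 h1 with h | h
    · exact hxP (by simpa using P.sub_mem h hpP)
    · exact hyP h
end

section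
/- Let P be a g-weakly total prime ideal of R and suppose (x, y) is a g-total twin-zero of P. If xr ∈ P for some r ∈ R_g, then xr = 0. -/
/-- If `P` is a `g`-weakly total prime ideal of `R`, `(x, y)` is a `g`-total twin-zero of
`P`, and `xr ∈ P` for some `r ∈ R_g`, then `xr = 0`. -/
theorem stmt_13 {G R : Type*} [Group G] [DecidableEq G] [NonUnitalRing R]
    (𝒜 : G → AddSubgroup R) [DirectSum.Decomposition 𝒜]
    (hmul : ∀ ⦃g h : G⦄ ⦃a b : R⦄, a ∈ 𝒜 g → b ∈ 𝒜 h → a * b ∈ 𝒜 (g * h))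
    (g : G) (P : TwoSidedIdeal R) (hP : IsGWeaklyTotalPrime 𝒜 g P)
    (x y : R) (hx : x ∈ 𝒜 g) (hy : y ∈ 𝒜 g) (hxy : x * y = 0)
    (hxP : x ∉ P) (hyP : y ∉ P)
    (r : R) (hr : r ∈ 𝒜 g) (hxr : x * r ∈ P) :
    x * r = 0 := by
  by_contra hne
  obtain ⟨-, -, hprime⟩ := hP
  have hrP : r ∈ P := (hprime x hx r hr hne hxr).resolve_left hxP
  have hxyr : x * (y + r) = x * r := by rw [mul_add, hxy, zero_add]
  have := hprime x hx (y + r) (add_mem hy hr) (by rw [hxyr]; exact hne) (by rw [hxyr]; exact hxr)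
  rcases this with h | h
  · exact hxP h
  · exact hyP (by simpa using P.sub_mem h hrP)
end

section
/- Let R be a G-graded ring and g ∈ G. If P is a g-weakly total prime ideal of R that is not g-total prime, then P_g² = 0; that is, pq = 0 for all p, q ∈ P ∩ R_g. -/
/-- If `P` is a `g`-weakly total prime ideal of `R` that is not `g`-total prime, then
`P_g² = 0`. -/
theorem stmt_14 {G R : Type*} [Group G] [DecidableEq G] [NonUnitalRing R]
    (𝒜 : G → AddSubgroup R) [DirectSum.Decomposition 𝒜]
    (hmul : ∀ ⦃g h : G⦄ ⦃a b : R⦄, a ∈ 𝒜 g → b ∈ 𝒜 h → a * b ∈ 𝒜 (g * h))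
    (g : G) (P : TwoSidedIdeal R) (hP : IsGWeaklyTotalPrime 𝒜 g P)
    (hnt : ¬ IsGTotalPrime 𝒜 g P) :
    ∀ p q : R, p ∈ P → p ∈ 𝒜 g → q ∈ P → q ∈ 𝒜 g → p * q = 0 := by
  obtain ⟨hgr, hne, hwp⟩ := hP
  -- extract a counterexample to total primality
  have hcx : ∃ a ∈ 𝒜 g, ∃ b ∈ 𝒜 g, a * b ∈ P ∧ a ∉ P ∧ b ∉ P := by
    by_contra h
    push_neg at h
    exact hnt ⟨hgr, hne, fun x hx y hy hxy => by
      rcases Classical.em (x ∈ P) with hx' | hx'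
      · exact Or.inl hx'
      · exact Or.inr (h x hx y hy hxy hx')⟩
  obtain ⟨a, ha, b, hb, hab, haP, hbP⟩ := hcx
  have hab0 : a * b = 0 := by
    by_contra h
    exact (hwp a ha b hb h hab).elim haP hbP
  -- a * P_g = 0
  have haq : ∀ q : R, q ∈ P → q ∈ 𝒜 g → a * q = 0 := by
    intro q hq hqg
    by_contra h
    have h1 : a * (b + q) = a * q := by rw [mul_add, hab0, zero_add]
    have h2 : a * (b + q) ∈ P := h1 ▸ P.mul_mem_left a q hq
    rcases hwp a ha (b + q) ((𝒜 g).add_mem hb hqg) (h1 ▸ h) h2 with h3 | h3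
    · exact haP h3
    · exact hbP (by simpa using P.sub_mem h3 hq)
  -- P_g * b = 0
  have hpb : ∀ p : R, p ∈ P → p ∈ 𝒜 g → p * b = 0 := by
    intro p hp hpg
    by_contra h
    have h1 : (a + p) * b = p * b := by rw [add_mul, hab0, zero_add]
    have h2 : (a + p) * b ∈ P := h1 ▸ P.mul_mem_right p b hp
    rcases hwp (a + p) ((𝒜 g).add_mem ha hpg) b hb (h1 ▸ h) h2 with h3 | h3
    · exact haP (by simpa using P.sub_mem h3 hp)
    · exact hbP h3
  intro p q hp hpg hq hqg
  by_contra h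
  have h1 : (a + p) * (b + q) = p * q := by
    rw [add_mul, mul_add, mul_add, hab0, haq q hq hqg, hpb p hp hpg]
    simp
  have h2 : (a + p) * (b + q) ∈ P := h1 ▸ P.mul_mem_left p q hq
  rcases hwp (a + p) ((𝒜 g).add_mem ha hpg) (b + q) ((𝒜 g).add_mem hb hqg)
      (h1 ▸ h) h2 with h3 | h3
  · exact haP (by simpa using P.sub_mem h3 hp)
  · exact hbP (by simpa using P.sub_mem h3 hq)
end

section
/- Let R be a G-graded ring, g ∈ G, and P a graded ideal of R with P ∩ R_g ≠ R_g. If P_g² ≠ 0 (i.e., there exist p, q ∈ P ∩ R_g with pq ≠ 0), then P is a g-total prime ideal of R if and only if P is a g-weakly total prime ideal of R. -/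
/-- If `P` is a graded ideal with `P ∩ R_g ≠ R_g` and `P_g² ≠ 0`, then `P` is `g`-total
prime iff `P` is `g`-weakly total prime. -/
theorem stmt_15 {G R : Type*} [Group G] [DecidableEq G] [NonUnitalRing R]
    (𝒜 : G → AddSubgroup R) [DirectSum.Decomposition 𝒜]
    (hmul : ∀ ⦃g h : G⦄ ⦃a b : R⦄, a ∈ 𝒜 g → b ∈ 𝒜 h → a * b ∈ 𝒜 (g * h))
    (g : G) (P : TwoSidedIdeal R) (hP : IsGradedIdeal 𝒜 P)
    (hproper : ¬ ((𝒜 g : Set R) ⊆ (P : Set R)))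
    (hsq : ∃ p q : R, p ∈ P ∧ p ∈ 𝒜 g ∧ q ∈ P ∧ q ∈ 𝒜 g ∧ p * q ≠ 0) :
    IsGTotalPrime 𝒜 g P ↔ IsGWeaklyTotalPrime 𝒜 g P := by
  constructor
  · rintro ⟨h1, h2, h3⟩
    exact ⟨h1, h2, fun x hx y hy _ hxy => h3 x hx y hy hxy⟩
  · rintro ⟨h1, h2, h3⟩
    refine ⟨h1, h2, fun x hx y hy hxy => ?_⟩
    by_cases h0 : x * y = 0
    · by_contra hc
      push_neg at hc
      obtain ⟨hxP, hyP⟩ := hc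
      -- x * q' = 0 for all q' ∈ P ∩ 𝒜 g
      have hxq : ∀ q' : R, q' ∈ P → q' ∈ 𝒜 g → x * q' = 0 := by
        intro q' hq'P hq'g
        by_contra hne
        have hyq : y + q' ∈ 𝒜 g := (𝒜 g).add_mem hy hq'g
        have hprod : x * (y + q') = x * q' := by rw [mul_add, h0, zero_add]
        have hmem : x * (y + q') ∈ P := by
          rw [hprod]; exact P.mul_mem_left _ _ hq'P
        have := h3 x hx (y + q') hyq (by rw [hprod]; exact hne) hmem
        rcases this with h | h
        · exact hxP h
        · exact hyP (by simpa using P.sub_mem h hq'P)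
      -- p' * y = 0 for all p' ∈ P ∩ 𝒜 g
      have hpy : ∀ p' : R, p' ∈ P → p' ∈ 𝒜 g → p' * y = 0 := by
        intro p' hp'P hp'g
        by_contra hne
        have hxp : x + p' ∈ 𝒜 g := (𝒜 g).add_mem hx hp'g
        have hprod : (x + p') * y = p' * y := by rw [add_mul, h0, zero_add]
        have hmem : (x + p') * y ∈ P := by
          rw [hprod]; exact P.mul_mem_right _ _ hp'P
        have := h3 (x + p') hxp y hy (by rw [hprod]; exact hne) hmem
        rcases this with h | h
        · exact hxP (by simpa using P.sub_mem h hp'P)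
        · exact hyP h
      obtain ⟨p, q, hpP, hpg, hqP, hqg, hpq⟩ := hsq
      have hprod : (x + p) * (y + q) = p * q := by
        rw [add_mul, mul_add, mul_add, h0, hxq q hqP hqg, hpy p hpP hpg]
        abel
      have hmem : (x + p) * (y + q) ∈ P := by
        rw [hprod]; exact P.mul_mem_left _ _ hqP
      have := h3 (x + p) ((𝒜 g).add_mem hx hpg) (y + q) ((𝒜 g).add_mem hy hqg)
        (by rw [hprod]; exact hpq) hmem
      rcases this with h | h
      · exact hxP (by simpa using P.sub_mem h hpP)
      · exact hyP (by simpa using P.sub_mem h hqP)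
    · exact h3 x hx y hy h0 hxy
end

section
/- Let P be a g-weakly total prime ideal of R. If x ∈ R_g and Y ⊆ R_g are such that xY ⊆ P and xY ≠ {0} (where xY = {xb : b ∈ Y}), then either x ∈ P or Y ⊆ P. -/
/-- If `P` is a `g`-weakly total prime ideal of `R`, `x ∈ R_g` and `Y ⊆ R_g` with
`0 ≠ xY ⊆ P`, then `x ∈ P` or `Y ⊆ P`. -/
theorem stmt_16 {G R : Type*} [Group G] [DecidableEq G] [NonUnitalRing R]
    (𝒜 : G → AddSubgroup R) [DirectSum.Decomposition 𝒜]
    (hmul : ∀ ⦃g h : G⦄ ⦃a b : R⦄, a ∈ 𝒜 g → b ∈ 𝒜 h → a * b ∈ 𝒜 (g * h))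
    (g : G) (P : TwoSidedIdeal R) (hP : IsGWeaklyTotalPrime 𝒜 g P)
    (x : R) (hx : x ∈ 𝒜 g) (Y : Set R) (hY : Y ⊆ (𝒜 g : Set R))
    (hsub : ∀ b ∈ Y, x * b ∈ P) (hne : ∃ b ∈ Y, x * b ≠ 0) :
    x ∈ P ∨ Y ⊆ (P : Set R) := by
  obtain ⟨b, hbY, hb0⟩ := hne
  obtain ⟨-, -, hprime⟩ := hP
  by_cases hxP : x ∈ P
  · exact Or.inl hxP
  have hbP : b ∈ P := (hprime x hx b (hY hbY) hb0 (hsub b hbY)).resolve_left hxP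
  right
  intro y hyY
  by_cases h0 : x * y = 0
  · have hsum : x * (y + b) ≠ 0 := by rw [mul_add, h0, zero_add]; exact hb0
    have hsumP : x * (y + b) ∈ P := by rw [mul_add, h0, zero_add]; exact hsub b hbY
    have hyb : y + b ∈ P :=
      (hprime x hx (y + b) (AddSubgroup.add_mem _ (hY hyY) (hY hbY)) hsum hsumP).resolve_left
        hxP
    have : y = (y + b) - b := by abel
    rw [SetLike.mem_coe, this]
    exact P.sub_mem hyb hbP
  · exact (hprime x hx y (hY hyY) h0 (hsub y hyY)).resolve_left hxP
end

section
/- Every proper graded ideal of a G-graded ring R is a graded weakly total prime ideal if and only if for all homogeneous elements a, b ∈ h(R), the two-sided ideal ⟨ab⟩ generated by ab satisfies ⟨ab⟩ = ⟨a⟩, ⟨ab⟩ = ⟨b⟩, or ⟨ab⟩ = 0. -/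
/-- A proper graded ideal `P` is graded weakly total prime if `0 ≠ xy ∈ P` implies
`x ∈ P` or `y ∈ P` for homogeneous `x`, `y`. -/
def IsGradedWeaklyTotalPrime {G R : Type*} [DecidableEq G] [NonUnitalRing R]
    (𝒜 : G → AddSubgroup R) [DirectSum.Decomposition 𝒜] (P : TwoSidedIdeal R) : Prop :=
  P ≠ ⊤ ∧ IsGradedIdeal 𝒜 P ∧
    ∀ x y : R, SetLike.IsHomogeneousElem 𝒜 x → SetLike.IsHomogeneousElem 𝒜 y →
      x * y ≠ 0 → x * y ∈ P → x ∈ P ∨ y ∈ P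

/-- A proper graded ideal `P` is graded total prime if `xy ∈ P` implies `x ∈ P` or
`y ∈ P` for homogeneous `x`, `y`. -/
def IsGradedTotalPrime {G R : Type*} [DecidableEq G] [NonUnitalRing R]
    (𝒜 : G → AddSubgroup R) [DirectSum.Decomposition 𝒜] (P : TwoSidedIdeal R) : Prop :=
  P ≠ ⊤ ∧ IsGradedIdeal 𝒜 P ∧
    ∀ x y : R, SetLike.IsHomogeneousElem 𝒜 x → SetLike.IsHomogeneousElem 𝒜 y →
      x * y ∈ P → x ∈ P ∨ y ∈ P

/-!
For homogeneous `x` the ideal `⟨x⟩` is graded: the elements all of whose homogeneous components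
lie in `⟨x⟩` form a two-sided ideal (products of homogeneous elements are homogeneous) that
contains `x`. So if every proper graded ideal is weakly total prime, apply this to `⟨ab⟩`: unless
`ab = 0` or `⟨ab⟩ = R`, one of `a`, `b` lies in `⟨ab⟩`, and `⟨ab⟩ ⊆ ⟨a⟩ ∩ ⟨b⟩` gives the
trichotomy. Conversely, if `0 ≠ xy ∈ P` then `⟨xy⟩ ≠ 0`, so `⟨xy⟩` is `⟨x⟩` or `⟨y⟩`, and
`⟨xy⟩ ⊆ P`.
-/

open DirectSum SetLike

namespace TwoSidedIdeal

variable {R : Type*} [NonUnitalRing R]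

theorem span_singleton_le_iff_mem {x : R} {I : TwoSidedIdeal R} : span {x} ≤ I ↔ x ∈ I :=
  span_le.trans Set.singleton_subset_iff

theorem mem_span_singleton_self (x : R) : x ∈ span {x} :=
  subset_span rfl

theorem span_singleton_mul_le_left (a b : R) : span {a * b} ≤ span {a} :=
  span_singleton_le_iff_mem.2 <| mul_mem_right _ _ _ (mem_span_singleton_self a)

theorem span_singleton_mul_le_right (a b : R) : span {a * b} ≤ span {b} :=
  span_singleton_le_iff_mem.2 <| mul_mem_left _ _ _ (mem_span_singleton_self b)

theorem span_singleton_eq_bot {x : R} : span {x} = ⊥ ↔ x = 0 := by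
  rw [eq_bot_iff, span_singleton_le_iff_mem, mem_bot]

theorem span_singleton_mul_eq_left_of_mem {a b : R} (ha : a ∈ span {a * b}) :
    span {a * b} = span {a} :=
  (span_singleton_mul_le_left a b).antisymm (span_singleton_le_iff_mem.2 ha)

theorem span_singleton_mul_eq_right_of_mem {a b : R} (hb : b ∈ span {a * b}) :
    span {a * b} = span {b} :=
  (span_singleton_mul_le_right a b).antisymm (span_singleton_le_iff_mem.2 hb)

end TwoSidedIdeal

theorem isHomogeneousElem_mul {G R : Type*} [Mul G] [NonUnitalRing R] {𝒜 : G → AddSubgroup R}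
    (hmul : ∀ ⦃g h : G⦄ ⦃a b : R⦄, a ∈ 𝒜 g → b ∈ 𝒜 h → a * b ∈ 𝒜 (g * h)) {a b : R}
    (ha : IsHomogeneousElem 𝒜 a) (hb : IsHomogeneousElem 𝒜 b) : IsHomogeneousElem 𝒜 (a * b) :=
  let ⟨g, hg⟩ := ha
  let ⟨g', hg'⟩ := hb
  ⟨g * g', hmul hg hg'⟩

section Graded

variable {G R : Type*} [DecidableEq G] [NonUnitalRing R]
  (𝒜 : G → AddSubgroup R) [Decomposition 𝒜]

theorem decompose_mem_of_isHomogeneousElem {S : Type*} [SetLike S R] [ZeroMemClass S R]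
    {P : S} {w : R} (hw : IsHomogeneousElem 𝒜 w) (hwP : w ∈ P) (g : G) :
    (decompose 𝒜 w g : R) ∈ P := by
  obtain ⟨i, hi⟩ := hw
  rcases eq_or_ne i g with rfl | hne
  · rwa [decompose_of_mem_same 𝒜 hi]
  · rw [decompose_of_mem_ne 𝒜 hi hne]
    exact zero_mem P

theorem mul_mem_of_forall_decompose_mul_mem (S : AddSubgroup R) (a b : R)
    (h : ∀ g g', (decompose 𝒜 a g : R) * decompose 𝒜 b g' ∈ S) : a * b ∈ S := by
  classical
  rw [← sum_support_decompose 𝒜 a, ← sum_support_decompose 𝒜 b, Finset.sum_mul_sum]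
  exact S.sum_mem fun g _ => S.sum_mem fun g' _ => h g g'

def TwoSidedIdeal.gradedCore (P : TwoSidedIdeal R) : AddSubgroup R where
  carrier := {y | ∀ g, (decompose 𝒜 y g : R) ∈ P}
  zero_mem' g := by simp
  add_mem' {a b} ha hb g := by
    simpa only [decompose_add, DirectSum.add_apply, AddSubgroup.coe_add] using
      P.add_mem (ha g) (hb g)
  neg_mem' {a} ha g := by
    rw [decompose_neg]
    exact P.neg_mem (ha g)

namespace TwoSidedIdeal

variable {𝒜}

theorem mem_gradedCore_of_isHomogeneousElem {P : TwoSidedIdeal R} {w : R}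
    (hw : IsHomogeneousElem 𝒜 w) (hwP : w ∈ P) : w ∈ P.gradedCore 𝒜 :=
  decompose_mem_of_isHomogeneousElem 𝒜 hw hwP

variable [Mul G] (hmul : ∀ ⦃g h : G⦄ ⦃a b : R⦄, a ∈ 𝒜 g → b ∈ 𝒜 h → a * b ∈ 𝒜 (g * h))
include hmul

theorem mul_mem_gradedCore_left {P : TwoSidedIdeal R} (a : R) {b : R}
    (hb : b ∈ P.gradedCore 𝒜) : a * b ∈ P.gradedCore 𝒜 :=
  mul_mem_of_forall_decompose_mul_mem 𝒜 _ a b fun g g' =>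
    mem_gradedCore_of_isHomogeneousElem
      (isHomogeneousElem_mul hmul ⟨g, coe_mem _⟩ ⟨g', coe_mem _⟩)
      (P.mul_mem_left _ _ (hb g'))

theorem mul_mem_gradedCore_right {P : TwoSidedIdeal R} {a : R} (b : R)
    (ha : a ∈ P.gradedCore 𝒜) : a * b ∈ P.gradedCore 𝒜 :=
  mul_mem_of_forall_decompose_mul_mem 𝒜 _ a b fun g g' =>
    mem_gradedCore_of_isHomogeneousElem
      (isHomogeneousElem_mul hmul ⟨g, coe_mem _⟩ ⟨g', coe_mem _⟩)
      (P.mul_mem_right _ _ (ha g))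

theorem isGradedIdeal_span {s : Set R} (hs : ∀ x ∈ s, IsHomogeneousElem 𝒜 x) :
    IsGradedIdeal 𝒜 (span s) := fun y hy => by
  change y ∈ (span s).gradedCore 𝒜
  induction hy using span_induction with
  | mem x hx => exact mem_gradedCore_of_isHomogeneousElem (hs x hx) (subset_span hx)
  | zero => exact AddSubgroup.zero_mem _
  | add _ _ _ _ hx hy => exact AddSubgroup.add_mem _ hx hy
  | neg _ _ hx => exact AddSubgroup.neg_mem _ hx
  | left_absorb a _ _ hx => exact mul_mem_gradedCore_left hmul a hx
  | right_absorb b _ _ hx => exact mul_mem_gradedCore_right hmul b hx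

end TwoSidedIdeal

end Graded

open TwoSidedIdeal

/-- Every proper graded ideal of `R` is graded weakly total prime iff for all homogeneous
`a, b ∈ h(R)`, `⟨ab⟩ = ⟨a⟩`, `⟨ab⟩ = ⟨b⟩`, or `⟨ab⟩ = 0`. -/
theorem stmt_19 {G R : Type*} [Group G] [DecidableEq G] [NonUnitalRing R]
    (𝒜 : G → AddSubgroup R) [DirectSum.Decomposition 𝒜]
    (hmul : ∀ ⦃g h : G⦄ ⦃a b : R⦄, a ∈ 𝒜 g → b ∈ 𝒜 h → a * b ∈ 𝒜 (g * h)) :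
    (∀ P : TwoSidedIdeal R, P ≠ ⊤ → IsGradedIdeal 𝒜 P → IsGradedWeaklyTotalPrime 𝒜 P) ↔
      ∀ a b : R, SetLike.IsHomogeneousElem 𝒜 a → SetLike.IsHomogeneousElem 𝒜 b →
        (TwoSidedIdeal.span {a * b} = TwoSidedIdeal.span {a} ∨
         TwoSidedIdeal.span {a * b} = TwoSidedIdeal.span {b} ∨
         TwoSidedIdeal.span ({a * b} : Set R) = ⊥) := by
  constructor
  · intro H a b ha hb
    by_cases hab : a * b = 0
    · exact Or.inr <| Or.inr <| span_singleton_eq_bot.2 hab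
    have hmem : a ∈ span {a * b} ∨ b ∈ span {a * b} := by
      by_cases htop : span {a * b} = ⊤
      · exact Or.inl (htop ▸ mem_top R)
      have hgr : IsGradedIdeal 𝒜 (span {a * b}) :=
        isGradedIdeal_span hmul fun x hx => hx ▸ isHomogeneousElem_mul hmul ha hb
      exact (H _ htop hgr).2.2 a b ha hb hab (mem_span_singleton_self _)
    exact hmem.imp span_singleton_mul_eq_left_of_mem
      (fun hb => Or.inl (span_singleton_mul_eq_right_of_mem hb))
  · intro H P hP hgr
    refine ⟨hP, hgr, fun x y hx hy hxy hxyP => ?_⟩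
    have hle : span {x * y} ≤ P := span_singleton_le_iff_mem.2 hxyP
    rcases H x y hx hy with h | h | h
    · exact Or.inl (hle (h ▸ mem_span_singleton_self x))
    · exact Or.inr (hle (h ▸ mem_span_singleton_self y))
    · exact absurd (span_singleton_eq_bot.1 h) hxy
end
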